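/- arXiv:1307.4035 — 9 statements merged into one kernel-verified Lean document; each statement's English description precedes it below -/
import Mathlib

section
/- Let G=(V,E) be a graph where vertex i has odd degree k ≤ d, and let z be an edge weighting with values in (0,1] such that for any two edges e1, e2 incident to i, z(e1)/z(e2) < (d+1)/(d-1). Then for any assignment A : V → {-1,+1}, the sign of the unweighted sum ∑_{j ∈ N(i)} A(j) equals the sign of the weighted sum ∑_{j ∈ N(i)} z(i,j)·A(j). -/
open Finset

/-
Split the neighbours of `i` into the set `P` of `+1` opinions and the set `M` of `-1` opinions.
If the unweighted sum `#P - #M` is positive then `#P ≥ #M + 1`, and together with `#P + #M ≤ d`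
this gives `(d + 1) #M ≤ (d - 1) #P`. Legality says that every weight is less than `(d+1)/(d-1)`
times every other one, so `∑_M z < (d+1)/(d-1) · #M · min_P z ≤ #P · min_P z ≤ ∑_P z`, i.e. the
weighted sum is positive as well. The negative case follows by flipping all opinions, and the sum
is never zero since the degree is odd.
-/

theorem sum_lt_sum_of_mul_lt_mul {ι : Type*} {P M : Finset ι} {w : ι → ℝ} {d : ℕ}
    (hw : ∀ k ∈ P, 0 < w k) (hlt : #M < #P) (hcard : #P + #M ≤ d)
    (hratio : ∀ j ∈ M, ∀ k ∈ P, w j * (d - 1) < (d + 1) * w k) :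
    ∑ j ∈ M, w j < ∑ k ∈ P, w k := by
  have hP : P.Nonempty := card_pos.mp (by omega)
  rcases M.eq_empty_or_nonempty with rfl | hM
  · simpa using sum_pos hw hP
  obtain ⟨k₀, hk₀, hmin⟩ := P.exists_min_image w hP
  obtain ⟨j₀, hj₀, hmax⟩ := M.exists_max_image w hM
  have hMpos : (0 : ℝ) < #M := by exact_mod_cast hM.card_pos
  have hd : (0 : ℝ) < d - 1 := by
    have : 1 < d := by have := hM.card_pos; omega
    rw [sub_pos]; exact_mod_cast this
  -- equivalently `#P + #M ≤ d * (#P - #M)`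
  have hcoef : ((d : ℝ) + 1) * #M ≤ (d - 1) * #P := by
    have hlt' : (#M : ℝ) + 1 ≤ #P := by exact_mod_cast hlt
    have hcard' : (#P : ℝ) + #M ≤ d := by exact_mod_cast hcard
    nlinarith
  refine lt_of_mul_lt_mul_left ?_ hd.le
  calc (d - 1) * ∑ j ∈ M, w j
      ≤ (d - 1) * (#M * w j₀) := by
        gcongr; simpa using M.sum_le_card_nsmul w _ hmax
    _ = #M * (w j₀ * (d - 1)) := by ring
    _ < #M * ((d + 1) * w k₀) := mul_lt_mul_of_pos_left (hratio j₀ hj₀ k₀ hk₀) hMpos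
    _ = ((d + 1) * #M) * w k₀ := by ring
    _ ≤ ((d - 1) * #P) * w k₀ := by gcongr; exact (hw k₀ hk₀).le
    _ = (d - 1) * (#P * w k₀) := by ring
    _ ≤ (d - 1) * ∑ k ∈ P, w k := by
        gcongr; simpa using P.card_nsmul_le_sum w _ hmin

section SignSums

variable {ι R : Type*} [CommRing R] {S : Finset ι} {A : ι → ℤ}

theorem sum_mul_sign_eq (hA : ∀ j ∈ S, A j = 1 ∨ A j = -1) (w : ι → R) :
    ∑ j ∈ S, w j * A j = ∑ j ∈ S with A j = 1, w j - ∑ j ∈ S with A j ≠ 1, w j := by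
  rw [sub_eq_add_neg, ← sum_neg_distrib, ← sum_ite]
  refine sum_congr rfl fun j hj => ?_
  rcases hA j hj with h | h <;> simp [h]

theorem sum_sign_eq (hA : ∀ j ∈ S, A j = 1 ∨ A j = -1) :
    ∑ j ∈ S, (A j : R) = #{j ∈ S | A j = 1} - #{j ∈ S | A j ≠ 1} := by
  simpa using sum_mul_sign_eq (R := R) hA 1

theorem sum_sign_ne_zero_of_odd_card (hA : ∀ j ∈ S, A j = 1 ∨ A j = -1) (hS : Odd #S) :
    ∑ j ∈ S, A j ≠ 0 := by
  have hsum : ∑ j ∈ S, A j = #{j ∈ S | A j = 1} - #{j ∈ S | A j ≠ 1} := by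
    simpa using sum_sign_eq (R := ℤ) hA
  have hcard : #{j ∈ S | A j = 1} + #{j ∈ S | A j ≠ 1} = #S :=
    card_filter_add_card_filter_not _
  obtain ⟨t, ht⟩ := hS
  omega

theorem sum_mul_sign_pos_of_sum_sign_pos {w : ι → ℝ} {d : ℕ}
    (hA : ∀ j ∈ S, A j = 1 ∨ A j = -1) (hw : ∀ j ∈ S, 0 < w j) (hcard : #S ≤ d)
    (hratio : ∀ j ∈ S, ∀ k ∈ S, w j * (d - 1) < (d + 1) * w k)
    (hpos : 0 < ∑ j ∈ S, (A j : ℝ)) :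
    0 < ∑ j ∈ S, w j * A j := by
  have hsplit : #{j ∈ S | A j = 1} + #{j ∈ S | A j ≠ 1} = #S :=
    card_filter_add_card_filter_not _
  rw [sum_sign_eq hA, sub_pos] at hpos
  rw [sum_mul_sign_eq hA, sub_pos]
  refine sum_lt_sum_of_mul_lt_mul (fun k hk => hw k (mem_filter.mp hk).1) ?_ (by omega)
    fun j hj k hk => hratio j (mem_filter.mp hj).1 k (mem_filter.mp hk).1
  exact_mod_cast hpos

theorem sum_sign_pos_iff_sum_mul_sign_pos {w : ι → ℝ} {d : ℕ}
    (hA : ∀ j ∈ S, A j = 1 ∨ A j = -1) (hS : Odd #S) (hw : ∀ j ∈ S, 0 < w j) (hcard : #S ≤ d)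
    (hratio : ∀ j ∈ S, ∀ k ∈ S, w j * (d - 1) < (d + 1) * w k) :
    0 < ∑ j ∈ S, (A j : ℝ) ↔ 0 < ∑ j ∈ S, w j * A j := by
  refine ⟨sum_mul_sign_pos_of_sum_sign_pos hA hw hcard hratio, fun hpos => ?_⟩
  have hne : ∑ j ∈ S, (A j : ℝ) ≠ 0 := by
    exact_mod_cast sum_sign_ne_zero_of_odd_card hA hS
  by_contra hnonpos
  have hneg : 0 < ∑ j ∈ S, ((-A j : ℤ) : ℝ) := by
    push_cast
    rw [sum_neg_distrib, neg_pos]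
    exact lt_of_le_of_ne (not_lt.mp hnonpos) hne
  have hA' : ∀ j ∈ S, -A j = 1 ∨ -A j = -1 := fun j hj => by
    rcases hA j hj with h | h <;> simp [h]
  have := sum_mul_sign_pos_of_sum_sign_pos hA' hw hcard hratio hneg
  push_cast at this
  simp only [mul_neg, sum_neg_distrib, neg_pos] at this
  linarith

end SignSums

/-- For a vertex `i` of odd degree `k ≤ d` and a `d`-legal edge weighting `z`
(values in `(0,1]`, ratio of weights of edges at `i` less than `(d+1)/(d-1)`),
the sign of the unweighted sum of the neighbors' opinions equals the sign of
the `z`-weighted sum. -/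
theorem stmt_0 {V : Type*} (G : SimpleGraph V) [∀ v : V, Fintype (G.neighborSet v)]
    (d : ℕ) (hd : 3 ≤ d) (i : V)
    (hodd : Odd (G.degree i)) (hdeg : G.degree i ≤ d)
    (z : V → V → ℝ)
    (hz01 : ∀ j ∈ G.neighborFinset i, 0 < z i j ∧ z i j ≤ 1)
    (hlegal : ∀ j ∈ G.neighborFinset i, ∀ k ∈ G.neighborFinset i,
      z i j / z i k < ((d : ℝ) + 1) / ((d : ℝ) - 1))
    (A : V → ℤ) (hA : ∀ j, A j = 1 ∨ A j = -1) :
    (if (0 : ℝ) < ∑ j ∈ G.neighborFinset i, (A j : ℝ) then (1 : ℤ) else -1)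
      = (if (0 : ℝ) < ∑ j ∈ G.neighborFinset i, z i j * (A j : ℝ) then (1 : ℤ) else -1) := by
  have hd' : (0 : ℝ) < d - 1 := by
    rw [sub_pos]; exact_mod_cast (by omega : 1 < d)
  have hratio : ∀ j ∈ G.neighborFinset i, ∀ k ∈ G.neighborFinset i,
      z i j * (d - 1) < (d + 1) * z i k := fun j hj k hk =>
    (div_lt_div_iff₀ (hz01 k hk).1 hd').mp (hlegal j hj k hk)
  rw [← G.card_neighborFinset_eq_degree] at hodd hdeg
  exact if_congr (sum_sign_pos_iff_sum_mul_sign_pos (fun j _ => hA j) hodd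
    (fun j hj => (hz01 j hj).1) hdeg hratio) rfl rfl
end

section
/- In synchronous majority dynamics on a locally finite graph with all degrees odd, where A^i_{t+1} = sgn(∑_{j ∈ N(i)} A^j_t), the quantity J^i_t = (1/2)(A^i_{t+1} − A^i_{t−1}) · ∑_{j ∈ N(i)} z(i,j) A^j_t is nonnegative for any d-legal edge weighting z, and J^i_t = 0 if and only if A^i_{t+1} = A^i_{t−1}. -/
/-!
Since every degree is odd, the neighbourhood sum `S = ∑ A^j_t` of `±1` opinions is nonzero, and
`A^i_{t+1} = sgn S`. A `d`-legal weighting keeps the sign: if `p > m` neighbours vote `+1` and `-1`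
with `p + m ≤ d`, then `2m + 1 ≤ d`, and the weights lie within the factor `(d+1)/(d-1)` of the
smallest one `w`, so the `-1` side weighs less than `m (d+1)/(d-1) w ≤ (m+1) w ≤ p w`. Hence
`A^i_{t+1} · ∑ z(i,j) A^j_t > 0`, and `J^i_t` is this positive number times
`(1 - A^i_{t+1} A^i_{t-1}) / 2 ∈ {0, 1}`.
-/

open Finset

section SignSums

variable {ι : Type*} {s : Finset ι} {f : ι → ℤ}

theorem sum_mul_sign_eq_sub {R : Type*} [CommRing R] (hf : ∀ j ∈ s, f j = 1 ∨ f j = -1)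
    (g : ι → R) :
    ∑ j ∈ s, g j * f j = ∑ j ∈ s with f j = 1, g j - ∑ j ∈ s with f j ≠ 1, g j := by
  rw [← sum_filter_add_sum_filter_not s (f · = 1), sub_eq_add_neg, ← sum_neg_distrib]
  congr 1
  · exact sum_congr rfl fun j hj => by simp [(mem_filter.mp hj).2]
  · refine sum_congr rfl fun j hj => ?_
    obtain ⟨hjs, hj1⟩ := mem_filter.mp hj
    simp [(hf j hjs).resolve_left hj1]

theorem sum_sign_eq_card_sub_card {R : Type*} [CommRing R]
    (hf : ∀ j ∈ s, f j = 1 ∨ f j = -1) :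
    ∑ j ∈ s, (f j : R) = #{j ∈ s | f j = 1} - #{j ∈ s | f j ≠ 1} := by
  simpa using sum_mul_sign_eq_sub hf (fun _ => (1 : R))

theorem sum_sign_ne_zero_of_odd_card_s1 (hf : ∀ j ∈ s, f j = 1 ∨ f j = -1) (hs : Odd #s) :
    ∑ j ∈ s, f j ≠ 0 := by
  have hsum : ∑ j ∈ s, f j = #{j ∈ s | f j = 1} - #{j ∈ s | f j ≠ 1} := by
    simpa using sum_sign_eq_card_sub_card (R := ℤ) hf
  have hcard : #{j ∈ s | f j = 1} + #{j ∈ s | f j ≠ 1} = #s := card_filter_add_card_filter_not _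
  obtain ⟨k, hk⟩ := hs
  omega

theorem sum_mul_sign_pos {d : ℕ} (hcard : #s ≤ d) {w : ι → ℝ} (hw : ∀ j ∈ s, 0 < w j)
    (hlegal : ∀ j ∈ s, ∀ k ∈ s, w j / w k < ((d : ℝ) + 1) / ((d : ℝ) - 1))
    (hf : ∀ j ∈ s, f j = 1 ∨ f j = -1) (hsum : 0 < ∑ j ∈ s, f j) :
    0 < ∑ j ∈ s, w j * f j := by
  set P := {j ∈ s | f j = 1}
  set M := {j ∈ s | f j ≠ 1}
  have hPM : #M < #P := by
    have : ∑ j ∈ s, f j = #P - #M := by simpa using sum_sign_eq_card_sub_card (R := ℤ) hf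
    omega
  have hPMs : #P + #M = #s := card_filter_add_card_filter_not _
  rw [sum_mul_sign_eq_sub hf, sub_pos]
  change ∑ j ∈ M, w j < ∑ j ∈ P, w j
  obtain ⟨j₀, hj₀, hmin⟩ := s.exists_min_image w (nonempty_of_sum_ne_zero hsum.ne')
  have hP : #P * w j₀ ≤ ∑ j ∈ P, w j := by
    simpa using card_nsmul_le_sum P w (w j₀) fun j hj => hmin j (mem_of_mem_filter j hj)
  rcases M.eq_empty_or_nonempty with hM | hM
  · rw [hM, sum_empty]
    have : (0 : ℝ) < #P := by exact_mod_cast hPM.trans_le' (Nat.zero_le _)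
    nlinarith [hw j₀ hj₀]
  · have hd : 2 * #M + 1 ≤ d := by omega
    have hd' : (2 * #M + 1 : ℝ) ≤ d := by exact_mod_cast hd
    have hM₁ : (1 : ℝ) ≤ #M := by exact_mod_cast hM.card_pos
    have hPM' : (#M + 1 : ℝ) ≤ #P := by exact_mod_cast hPM
    set r := ((d : ℝ) + 1) / ((d : ℝ) - 1)
    have hM_lt : ∑ j ∈ M, w j < #M * (r * w j₀) := by
      simpa using sum_lt_sum_of_nonempty hM fun j hj =>
        (div_lt_iff₀ (hw j₀ hj₀)).mp (hlegal j (mem_of_mem_filter j hj) j₀ hj₀)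
    have hr : #M * r ≤ #P := by
      rw [mul_div_assoc', div_le_iff₀ (by linarith)]
      nlinarith
    nlinarith [mul_le_mul_of_nonneg_right hr (hw j₀ hj₀).le]

theorem sum_mul_sign_neg {d : ℕ} (hcard : #s ≤ d) {w : ι → ℝ} (hw : ∀ j ∈ s, 0 < w j)
    (hlegal : ∀ j ∈ s, ∀ k ∈ s, w j / w k < ((d : ℝ) + 1) / ((d : ℝ) - 1))
    (hf : ∀ j ∈ s, f j = 1 ∨ f j = -1) (hsum : ∑ j ∈ s, f j < 0) :
    ∑ j ∈ s, w j * f j < 0 := by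
  have hf' : ∀ j ∈ s, -f j = 1 ∨ -f j = -1 := fun j hj => by
    rcases hf j hj with h | h <;> simp [h]
  have := sum_mul_sign_pos (f := (-f ·)) hcard hw hlegal hf' (by simpa using hsum)
  simpa using this

end SignSums

theorem half_sub_mul_nonneg_and_eq_zero_iff {a b : ℤ} (ha : a = 1 ∨ a = -1)
    (hb : b = 1 ∨ b = -1) {W : ℝ} (h : 0 < a * W) :
    0 ≤ (1 / 2 : ℝ) * ((a : ℝ) - b) * W ∧ ((1 / 2 : ℝ) * ((a : ℝ) - b) * W = 0 ↔ a = b) := by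
  rcases ha with rfl | rfl <;> rcases hb with rfl | rfl <;> push_cast at h ⊢ <;>
    refine ⟨by linarith, ?_⟩ <;> constructor <;> intro <;> first | rfl | linarith | simp_all

theorem majority_dynamics_eq_one_or_neg_one {V : Type*} (G : SimpleGraph V)
    [∀ v : V, Fintype (G.neighborSet v)] (A : ℕ → V → ℤ) (hA0 : ∀ i, A 0 i = 1 ∨ A 0 i = -1)
    (hdyn : ∀ t i, A (t + 1) i = if 0 < ∑ j ∈ G.neighborFinset i, A t j then 1 else -1)
    (t : ℕ) (i : V) : A t i = 1 ∨ A t i = -1 := by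
  cases t with
  | zero => exact hA0 i
  | succ t => rw [hdyn t i]; split_ifs <;> simp

/-- Here the time `t` of the informal statement is `t + 1`, so `A^i_{t+1} = A (t + 2)` and
`A^i_{t-1} = A t`. -/
theorem stmt_1 {V : Type*} (G : SimpleGraph V) [∀ v : V, Fintype (G.neighborSet v)]
    (d : ℕ) (hd : 3 ≤ d)
    (hodd : ∀ i, Odd (G.degree i)) (hdeg : ∀ i, G.degree i ≤ d)
    (z : V → V → ℝ) (hsym : ∀ i j, z i j = z j i)
    (hz01 : ∀ i j, G.Adj i j → 0 < z i j ∧ z i j ≤ 1)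
    (hlegal : ∀ i j k, G.Adj i j → G.Adj i k →
      z i j / z i k < ((d : ℝ) + 1) / ((d : ℝ) - 1))
    (A : ℕ → V → ℤ) (hA0 : ∀ i, A 0 i = 1 ∨ A 0 i = -1)
    (hdyn : ∀ t i, A (t + 1) i =
      if 0 < ∑ j ∈ G.neighborFinset i, A t j then 1 else -1)
    (i : V) (t : ℕ) :
    0 ≤ (1 / 2 : ℝ) * ((A (t + 2) i : ℝ) - (A t i : ℝ)) *
        ∑ j ∈ G.neighborFinset i, z i j * (A (t + 1) j : ℝ) ∧
    ((1 / 2 : ℝ) * ((A (t + 2) i : ℝ) - (A t i : ℝ)) *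
        ∑ j ∈ G.neighborFinset i, z i j * (A (t + 1) j : ℝ) = 0 ↔
      A (t + 2) i = A t i) := by
  have hsign := majority_dynamics_eq_one_or_neg_one G A hA0 hdyn
  have hcard : #(G.neighborFinset i) ≤ d := (G.card_neighborFinset_eq_degree i).trans_le (hdeg i)
  have hw : ∀ j ∈ G.neighborFinset i, 0 < z i j := fun j hj =>
    (hz01 i j ((G.mem_neighborFinset i j).mp hj)).1
  have hlegal' : ∀ j ∈ G.neighborFinset i, ∀ k ∈ G.neighborFinset i,
      z i j / z i k < ((d : ℝ) + 1) / ((d : ℝ) - 1) := fun j hj k hk =>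
    hlegal i j k ((G.mem_neighborFinset i j).mp hj) ((G.mem_neighborFinset i k).mp hk)
  have hS : ∑ j ∈ G.neighborFinset i, A (t + 1) j ≠ 0 :=
    sum_sign_ne_zero_of_odd_card_s1 (fun j _ => hsign _ j)
      ((G.card_neighborFinset_eq_degree i).symm ▸ hodd i)
  refine half_sub_mul_nonneg_and_eq_zero_iff (hsign _ i) (hsign t i) ?_
  rw [hdyn (t + 1) i]
  split_ifs with hpos
  · simpa using sum_mul_sign_pos hcard hw hlegal' (fun j _ => hsign _ j) hpos
  · simpa using sum_mul_sign_neg hcard hw hlegal' (fun j _ => hsign _ j)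
      (lt_of_le_of_ne (not_lt.mp hpos) hS)
end

section
/- In synchronous majority dynamics on a locally finite graph with odd degrees and a summable d-legal edge weighting z, the Lyapunov functional L_t = (1/4) ∑_{(i,j) ∈ E} z(i,j)(A^i_{t+1} − A^j_t)^2 satisfies L_t − L_{t−1} = −∑_{i ∈ V} J^i_t, where J^i_t = (1/2)(A^i_{t+1} − A^i_{t−1}) ∑_{j ∈ N(i)} z(i,j) A^j_t. -/
/-!
Since every spin is `±1`, `z (σ i - τ j)² = 2 z - 2 z σ i τ j`, so the difference of two
consecutive Lyapunov sums is `½ (∑ z A_t(i) A_{t-1}(j) - ∑ z A_{t+1}(i) A_t(j))` over adjacent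
pairs. Symmetry of `z` moves `A_t` to the second slot of the first sum, and grouping both sums by
their first vertex `i` gives `-∑_i J^i_t`. Summability of `z` makes every rearrangement legitimate.
-/

namespace SimpleGraph

variable {V : Type*} (G : SimpleGraph V)

theorem hasSum_sum_neighborFinset [∀ v, Fintype (G.neighborSet v)] {α : Type*}
    [AddCommMonoid α] [TopologicalSpace α] [ContinuousAdd α] [RegularSpace α]
    {g : V → V → α} {a : α} (hg : HasSum (fun p : {p : V × V // G.Adj p.1 p.2} => g p.1.1 p.1.2) a) :
    HasSum (fun i => ∑ j ∈ G.neighborFinset i, g i j) a := by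
  rw [← (Equiv.subtypeProdEquivSigmaSubtype G.Adj).symm.hasSum_iff] at hg
  refine hg.sigma fun i => ?_
  rw [neighborFinset_def, ← Finset.sum_set_coe]
  exact hasSum_fintype fun j : G.neighborSet i => g i j

theorem tsum_adj_swap {α : Type*} [AddCommMonoid α] [TopologicalSpace α] (g : V → V → α) :
    ∑' p : {p : V × V // G.Adj p.1 p.2}, g p.1.2 p.1.1
      = ∑' p : {p : V × V // G.Adj p.1 p.2}, g p.1.1 p.1.2 :=
  ((Equiv.prodComm V V).subtypeEquiv fun _ => G.adj_comm _ _).tsum_eq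
    fun p : {p : V × V // G.Adj p.1 p.2} => g p.1.1 p.1.2

theorem summable_adj_mul_mul {z : V → V → ℝ} {x y : V → ℝ}
    (hz : Summable fun p : {p : V × V // G.Adj p.1 p.2} => z p.1.1 p.1.2)
    (hx : ∀ i, |x i| ≤ 1) (hy : ∀ j, |y j| ≤ 1) :
    Summable fun p : {p : V × V // G.Adj p.1 p.2} => z p.1.1 p.1.2 * x p.1.1 * y p.1.2 := by
  refine hz.abs.of_norm_bounded fun p => ?_
  rw [Real.norm_eq_abs, abs_mul, abs_mul]
  calc |z p.1.1 p.1.2| * |x p.1.1| * |y p.1.2| ≤ |z p.1.1 p.1.2| * 1 * 1 := by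
        gcongr
        exacts [hx _, hy _]
    _ = |z p.1.1 p.1.2| := by ring

theorem tsum_adj_mul_sub_sq {z : V → V → ℝ}
    (hz : Summable fun p : {p : V × V // G.Adj p.1 p.2} => z p.1.1 p.1.2)
    {x y : V → ℝ} (hx : ∀ i, x i ^ 2 = 1) (hy : ∀ i, y i ^ 2 = 1) :
    ∑' p : {p : V × V // G.Adj p.1 p.2}, z p.1.1 p.1.2 * (x p.1.1 - y p.1.2) ^ 2
      = 2 * ∑' p : {p : V × V // G.Adj p.1 p.2}, z p.1.1 p.1.2
        - 2 * ∑' p : {p : V × V // G.Adj p.1 p.2}, z p.1.1 p.1.2 * x p.1.1 * y p.1.2 := by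
  have hxy := G.summable_adj_mul_mul hz (fun i => (sq_le_one_iff_abs_le_one _).1 (hx i).le)
    (fun j => (sq_le_one_iff_abs_le_one _).1 (hy j).le)
  refine HasSum.tsum_eq <|
    ((hz.hasSum.mul_left 2).sub (hxy.hasSum.mul_left 2)).congr_fun fun p => ?_
  linear_combination z p.1.1 p.1.2 * (hx p.1.1 + hy p.1.2)

theorem lyapunov_sub_eq [∀ v, Fintype (G.neighborSet v)] {z : V → V → ℝ}
    (hsym : ∀ i j, z i j = z j i)
    (hz : Summable fun p : {p : V × V // G.Adj p.1 p.2} => z p.1.1 p.1.2)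
    {σ₀ σ₁ σ₂ : V → ℝ} (h₀ : ∀ i, σ₀ i ^ 2 = 1) (h₁ : ∀ i, σ₁ i ^ 2 = 1) (h₂ : ∀ i, σ₂ i ^ 2 = 1) :
    (1 / 4 : ℝ) * (∑' p : {p : V × V // G.Adj p.1 p.2},
        z p.1.1 p.1.2 * (σ₂ p.1.1 - σ₁ p.1.2) ^ 2)
      - (1 / 4 : ℝ) * (∑' p : {p : V × V // G.Adj p.1 p.2},
        z p.1.1 p.1.2 * (σ₁ p.1.1 - σ₀ p.1.2) ^ 2)
      = - ∑' i : V, (1 / 2 : ℝ) * (σ₂ i - σ₀ i) * ∑ j ∈ G.neighborFinset i, z i j * σ₁ j := by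
  have habs {σ : V → ℝ} (h : ∀ i, σ i ^ 2 = 1) (i : V) : |σ i| ≤ 1 :=
    (sq_le_one_iff_abs_le_one _).1 (h i).le
  have swap : ∑' p : {p : V × V // G.Adj p.1 p.2}, z p.1.1 p.1.2 * σ₁ p.1.1 * σ₀ p.1.2
      = ∑' p : {p : V × V // G.Adj p.1 p.2}, z p.1.1 p.1.2 * σ₀ p.1.1 * σ₁ p.1.2 := by
    refine Eq.trans ?_ (G.tsum_adj_swap fun i j => z i j * σ₀ i * σ₁ j)
    exact tsum_congr fun p => by rw [hsym]; ring
  have rhs : HasSum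
      (fun i => (1 / 2 : ℝ) * (σ₂ i - σ₀ i) * ∑ j ∈ G.neighborFinset i, z i j * σ₁ j)
      ((1 / 2) * (∑' p : {p : V × V // G.Adj p.1 p.2}, z p.1.1 p.1.2 * σ₂ p.1.1 * σ₁ p.1.2
        - ∑' p : {p : V × V // G.Adj p.1 p.2}, z p.1.1 p.1.2 * σ₀ p.1.1 * σ₁ p.1.2)) := by
    have h₂₁ := G.summable_adj_mul_mul hz (habs h₂) (habs h₁)
    have h₀₁ := G.summable_adj_mul_mul hz (habs h₀) (habs h₁)
    refine (G.hasSum_sum_neighborFinset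
      (g := fun i j => (1 / 2 : ℝ) * (z i j * σ₂ i * σ₁ j - z i j * σ₀ i * σ₁ j))
      ((h₂₁.hasSum.sub h₀₁.hasSum).mul_left (1 / 2))).congr_fun fun i => ?_
    rw [Finset.mul_sum]
    exact Finset.sum_congr rfl fun j _ => by ring
  rw [G.tsum_adj_mul_sub_sq hz h₂ h₁, G.tsum_adj_mul_sub_sq hz h₁ h₀, swap, rhs.tsum_eq]
  ring

end SimpleGraph
/-- With a summable `d`-legal edge weighting `z`, the Lyapunov functional
`L_t = (1/4) ∑_{(i,j) ∈ E} z(i,j)(A^i_{t+1} - A^j_t)^2` (sum over ordered adjacent pairs,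
as in the paper's manipulation) satisfies `L_t - L_{t-1} = -∑_i J^i_t`, where
`J^i_t = (1/2)(A^i_{t+1} - A^i_{t-1}) ∑_{j ∈ N(i)} z(i,j) A^j_t`.
(The time `t` of the claim is written `t+1` below.) -/
theorem stmt_2 {V : Type*} (G : SimpleGraph V) [∀ v : V, Fintype (G.neighborSet v)]
    (d : ℕ) (hd : 3 ≤ d)
    (hodd : ∀ i, Odd (G.degree i)) (hdeg : ∀ i, G.degree i ≤ d)
    (z : V → V → ℝ) (hsym : ∀ i j, z i j = z j i)
    (hz01 : ∀ i j, G.Adj i j → 0 < z i j ∧ z i j ≤ 1)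
    (hlegal : ∀ i j k, G.Adj i j → G.Adj i k →
      z i j / z i k < ((d : ℝ) + 1) / ((d : ℝ) - 1))
    (hzsum : Summable (fun p : {p : V × V // G.Adj p.1 p.2} => z p.1.1 p.1.2))
    (A : ℕ → V → ℤ) (hA0 : ∀ i, A 0 i = 1 ∨ A 0 i = -1)
    (hdyn : ∀ t i, A (t + 1) i =
      if 0 < ∑ j ∈ G.neighborFinset i, A t j then 1 else -1)
    (t : ℕ) :
    (1 / 4 : ℝ) * (∑' p : {p : V × V // G.Adj p.1 p.2},
        z p.1.1 p.1.2 * ((A (t + 2) p.1.1 : ℝ) - (A (t + 1) p.1.2 : ℝ)) ^ 2)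
      - (1 / 4 : ℝ) * (∑' p : {p : V × V // G.Adj p.1 p.2},
        z p.1.1 p.1.2 * ((A (t + 1) p.1.1 : ℝ) - (A t p.1.2 : ℝ)) ^ 2)
      = - ∑' i : V, (1 / 2 : ℝ) * ((A (t + 2) i : ℝ) - (A t i : ℝ)) *
          ∑ j ∈ G.neighborFinset i, z i j * (A (t + 1) j : ℝ) := by
  have spin : ∀ s i, (A s i : ℝ) ^ 2 = 1 := by
    rintro (_ | s) i
    · rcases hA0 i with h | h <;> simp [h]
    · rw [hdyn]
      split_ifs <;> simp
  exact G.lyapunov_sub_eq hsym hzsum (spin t) (spin (t + 1)) (spin (t + 2))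
end

section
/- Let G be a d-bounded degree graph that admits a summable d-legal edge weighting z : E → (0,1]. Then ∑_{r=0}^∞ ((d+1)/(d-1))^{-r} · n_r(G,i) < ∞ for every vertex i, where n_r(G,i) is the number of vertices at graph distance r from i. -/
/-- If a `d`-bounded degree connected graph admits a summable `d`-legal edge
weighting, then `∑_r ((d+1)/(d-1))^{-r} n_r(G,i) < ∞` for every vertex `i`, where
`n_r(G,i)` is the number of vertices at distance `r` from `i`. -/
theorem stmt_5 {V : Type*} (G : SimpleGraph V) [∀ v : V, Fintype (G.neighborSet v)]
    (hconn : G.Connected)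
    (d : ℕ) (hd : 3 ≤ d) (hdeg : ∀ i, G.degree i ≤ d)
    (z : V → V → ℝ) (hsym : ∀ i j, z i j = z j i)
    (hz01 : ∀ i j, G.Adj i j → 0 < z i j ∧ z i j ≤ 1)
    (hlegal : ∀ i j k, G.Adj i j → G.Adj i k →
      z i j / z i k < ((d : ℝ) + 1) / ((d : ℝ) - 1))
    (hzsum : Summable (fun e : G.edgeSet => Sym2.lift
      ⟨fun u v => z u v, fun u v => hsym u v⟩ (e : Sym2 V))) :
    ∀ i : V, Summable (fun r : ℕ =>
      (((d : ℝ) - 1) / ((d : ℝ) + 1)) ^ r * ({j | G.dist i j = r}.ncard : ℝ)) := by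
  classical
  intro i
  set q : ℝ := ((d : ℝ) - 1) / ((d : ℝ) + 1) with hqdef
  have hd3 : (3 : ℝ) ≤ (d : ℝ) := by exact_mod_cast hd
  have hq0 : 0 < q := div_pos (by linarith) (by linarith)
  have hq1 : q < 1 := (div_lt_one (by linarith)).mpr (by linarith)
  -- predecessor lemma
  have pred : ∀ (r : ℕ) (v : V), G.dist i v = r + 1 → ∃ u, G.Adj u v ∧ G.dist i u = r := by
    intro r v hv
    obtain ⟨p, hp⟩ := (hconn.preconnected v i).exists_walk_length_eq_dist
    rw [SimpleGraph.dist_comm, hv] at hp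
    cases p with
    | nil => simp at hp
    | @cons _ u _ h qw =>
      rw [SimpleGraph.Walk.length_cons] at hp
      have h1 : G.dist i u ≤ r := by
        rw [SimpleGraph.dist_comm]
        calc G.dist u i ≤ qw.length := SimpleGraph.dist_le qw
          _ = r := by omega
      have h2 : G.dist i v ≤ G.dist i u + 1 := by
        have := hconn.dist_triangle (u := i) (v := u) (w := v)
        have huv : G.dist u v = 1 := SimpleGraph.dist_eq_one_iff_adj.mpr h.symm
        omega
      exact ⟨u, h.symm, by omega⟩
  -- finiteness of balls and spheres
  have hball : ∀ r : ℕ, {j : V | G.dist i j ≤ r}.Finite := by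
    intro r
    induction r with
    | zero =>
      apply Set.Finite.subset (Set.finite_singleton i)
      intro v hv
      simp only [Set.mem_setOf_eq, Nat.le_zero] at hv
      simp [(hconn.dist_eq_zero_iff.mp hv).symm]
    | succ r ih =>
      have hsubset : {j : V | G.dist i j ≤ r + 1} ⊆
          {j : V | G.dist i j ≤ r} ∪ ⋃ u ∈ {j : V | G.dist i j ≤ r}, (G.neighborSet u) := by
        intro v hv
        simp only [Set.mem_setOf_eq] at hv
        by_cases h : G.dist i v ≤ r
        · exact Or.inl h
        · have hv' : G.dist i v = r + 1 := by omega
          obtain ⟨w, hadj, hw⟩ := pred r v hv'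
          exact Or.inr (Set.mem_biUnion (show w ∈ {j : V | G.dist i j ≤ r} from hw.le) hadj)
      exact (ih.union (Set.Finite.biUnion ih (fun u _ => (G.neighborSet u).toFinite))).subset
        hsubset
  have hsf : ∀ r : ℕ, {j : V | G.dist i j = r}.Finite := fun r =>
    (hball r).subset (fun v hv => le_of_eq hv)
  -- main summability of v ↦ q ^ dist i v
  have hg : Summable (fun v : V => q ^ G.dist i v) := by
    by_cases hex : ∃ v : V, v ≠ i
    · -- i has a neighbor
      obtain ⟨v0, hv0⟩ := hex
      obtain ⟨p, -⟩ := (hconn.preconnected i v0).exists_walk_length_eq_dist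
      have hnb : ∃ x, G.Adj i x := by
        cases p with
        | nil => exact absurd rfl hv0
        | @cons _ x _ h _ => exact ⟨x, h⟩
      obtain ⟨x0, hx0⟩ := hnb
      have hSne : ((G.neighborFinset i).image (z i)).Nonempty :=
        Finset.Nonempty.image ⟨x0, (SimpleGraph.mem_neighborFinset _ _ _).mpr hx0⟩ (z i)
      set m : ℝ := ((G.neighborFinset i).image (z i)).min' hSne with hmdef
      have hm0 : 0 < m := by
        have hmem := Finset.min'_mem _ hSne
        rw [Finset.mem_image] at hmem
        obtain ⟨x, hx, hxm⟩ := hmem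
        rw [SimpleGraph.mem_neighborFinset] at hx
        rw [hmdef, ← hxm]
        exact (hz01 i x hx).1
      have hm_le : ∀ x, G.Adj i x → m ≤ z i x := fun x hx =>
        Finset.min'_le _ _ (Finset.mem_image_of_mem _ ((SimpleGraph.mem_neighborFinset _ _ _).mpr hx))
      have hqc : q * (((d : ℝ) + 1) / ((d : ℝ) - 1)) = 1 := by
        rw [hqdef]; rw [div_mul_div_comm]; rw [div_eq_one_iff_eq (by nlinarith)]; ring
      have step : ∀ a b c : V, G.Adj a b → G.Adj a c → q * z a b ≤ z a c := by
        intro a b c hab hac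
        have hzc := (hz01 a c hac).1
        have h1 : z a b < (((d : ℝ) + 1) / ((d : ℝ) - 1)) * z a c := by
          have := hlegal a b c hab hac
          rwa [div_lt_iff₀ hzc] at this
        calc q * z a b ≤ q * ((((d : ℝ) + 1) / ((d : ℝ) - 1)) * z a c) :=
              mul_le_mul_of_nonneg_left h1.le hq0.le
          _ = z a c := by rw [← mul_assoc, hqc, one_mul]
      have H : ∀ r : ℕ, ∀ v : V, G.dist i v = r + 1 →
          ∃ w, G.Adj w v ∧ G.dist i w = r ∧ m * q ^ r ≤ z w v := by
        intro r
        induction r with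
        | zero =>
          intro v hv
          have hadj : G.Adj i v := SimpleGraph.dist_eq_one_iff_adj.mp hv
          exact ⟨i, hadj, by simp, by simpa using hm_le v hadj⟩
        | succ r ih =>
          intro v hv
          obtain ⟨w, hadj, hw⟩ := pred (r + 1) v hv
          obtain ⟨w', hadj', hw', hz'⟩ := ih w hw
          refine ⟨w, hadj, hw, ?_⟩
          have hstep := step w w' v hadj'.symm hadj
          have hq' : m * q ^ (r + 1) = q * (m * q ^ r) := by ring
          rw [hq']
          calc q * (m * q ^ r) ≤ q * z w' w := mul_le_mul_of_nonneg_left hz' hq0.le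
            _ = q * z w w' := by rw [hsym w' w]
            _ ≤ z w v := hstep
      -- choose edges
      have hH : ∀ v : {v : V // v ∉ ({i} : Finset V)},
          ∃ w, G.Adj w v.1 ∧ G.dist i w = G.dist i v.1 - 1 ∧
            m * q ^ (G.dist i v.1 - 1) ≤ z w v.1 := by
        intro v
        have hne : v.1 ≠ i := by simpa using v.2
        have hpos : 0 < G.dist i v.1 := hconn.pos_dist_of_ne (Ne.symm hne)
        have hd' : G.dist i v.1 = (G.dist i v.1 - 1) + 1 := by omega
        exact H (G.dist i v.1 - 1) v.1 hd'
      choose u hu1 hu2 hu3 using hH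
      have hdlt : ∀ v : {v : V // v ∉ ({i} : Finset V)}, G.dist i (u v) < G.dist i v.1 := by
        intro v
        have hne : v.1 ≠ i := by simpa using v.2
        have hpos : 0 < G.dist i v.1 := hconn.pos_dist_of_ne (Ne.symm hne)
        rw [hu2 v]; omega
      set E : {v : V // v ∉ ({i} : Finset V)} → G.edgeSet :=
        fun v => ⟨s(u v, v.1), (SimpleGraph.mem_edgeSet G).mpr (hu1 v)⟩ with hEdef
      have Einj : Function.Injective E := by
        intro a b hab
        have h1 : s(u a, a.1) = s(u b, b.1) := congrArg Subtype.val hab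
        rw [Sym2.eq_iff] at h1
        rcases h1 with ⟨_, h2⟩ | ⟨h2, h3⟩
        · exact Subtype.ext h2
        · exfalso
          have hA := hdlt a
          have hB := hdlt b
          rw [h2] at hA
          rw [← h3] at hB
          omega
      have hsum1 : Summable (fun v : {v : V // v ∉ ({i} : Finset V)} =>
          (q / m) * Sym2.lift ⟨fun a b => z a b, fun a b => hsym a b⟩ ((E v : G.edgeSet) : Sym2 V)) :=
        (hzsum.comp_injective Einj).mul_left _
      have hg' : Summable (fun v : {v : V // v ∉ ({i} : Finset V)} => q ^ G.dist i v.1) := by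
        apply Summable.of_nonneg_of_le (fun v => pow_nonneg hq0.le _) _ hsum1
        intro v
        have hlift : Sym2.lift ⟨fun a b => z a b, fun a b => hsym a b⟩
            ((E v : G.edgeSet) : Sym2 V) = z (u v) v.1 := by
          simp [hEdef]
        rw [hlift]
        have hne : v.1 ≠ i := by simpa using v.2
        have hpos : 0 < G.dist i v.1 := hconn.pos_dist_of_ne (Ne.symm hne)
        have h3 := hu3 v
        have hsplit : q ^ G.dist i v.1 = q * q ^ (G.dist i v.1 - 1) := by
          rw [← pow_succ']
          congr 1
          omega
        rw [hsplit]
        have hmul := mul_le_mul_of_nonneg_left h3 (div_pos hq0 hm0).le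
        have heq : (q / m) * (m * q ^ (G.dist i v.1 - 1)) = q * q ^ (G.dist i v.1 - 1) := by
          field_simp
        linarith [hmul, heq.ge]
      exact (Finset.summable_compl_iff ({i} : Finset V)).mp hg'
    · -- degenerate: V = {i}
      push_neg at hex
      apply summable_of_ne_finset_zero (s := ({i} : Finset V))
      intro v hv
      exact absurd (hex v) (by simpa using hv)
  -- conclude
  apply summable_of_sum_range_le (c := ∑' v : V, q ^ G.dist i v)
  · intro n
    exact mul_nonneg (pow_nonneg hq0.le n) (Nat.cast_nonneg _)
  · intro n
    have hterm : ∀ r ∈ Finset.range n,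
        q ^ r * ({j : V | G.dist i j = r}.ncard : ℝ) =
          ∑ v ∈ (hsf r).toFinset, q ^ G.dist i v := by
      intro r _
      rw [Set.ncard_eq_toFinset_card _ (hsf r)]
      have : ∑ v ∈ (hsf r).toFinset, q ^ G.dist i v =
          ∑ _v ∈ (hsf r).toFinset, q ^ r := by
        apply Finset.sum_congr rfl
        intro v hv
        rw [Set.Finite.mem_toFinset] at hv
        rw [hv]
      rw [this, Finset.sum_const, nsmul_eq_mul, mul_comm]
    rw [Finset.sum_congr rfl hterm]
    have hdisj : (↑(Finset.range n) : Set ℕ).PairwiseDisjoint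
        (fun r => (hsf r).toFinset) := by
      intro r1 _ r2 _ hne
      simp only [Function.onFun]
      rw [Finset.disjoint_left]
      intro v hv1 hv2
      rw [Set.Finite.mem_toFinset] at hv1 hv2
      exact hne (hv1 ▸ hv2 ▸ rfl)
    rw [← Finset.sum_biUnion hdisj]
    exact Summable.sum_le_tsum _ (fun v _ => pow_nonneg hq0.le _) hg
end

section
/- Let G be a d-bounded degree connected graph and i a vertex with M = ∑_{r=0}^∞ ((d+1)/(d-1))^{-r} · n_r(G,i) < ∞. Then G admits a summable d-legal edge weighting; in fact, setting a = (d+1)/(d-1), choosing any monotone increasing η : ℕ → (1/a, 1) and defining z(e) = a^{-ρ(i,e)} η(ρ(i,e))/η(0), the weighting z is d-legal and ∑_{e∈E} z(e) ≤ (d/η(0)) · M. -/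
/-!
Write `c = (d - 1)/(d + 1) = a⁻¹`, so that `z(e) = c^ρ η(ρ) / η(0)` with `ρ = ρ(i, e)`.

Legality: the two endpoints of an edge are at distances from `i` differing by at most one, so
for adjacent edges `e₁, e₂` we have `ρ(i, e₂) ≤ ρ(i, e₁) + 1`. Since `c < η < 1`, the profile
`r ↦ c^r η(r)` is antitone, and since `η` is strictly increasing,
`c^r η(r) < c^r η(r + 1) = a · c^(r+1) η(r + 1)`; together these give `z(e₁) < a · z(e₂)`.

Summability: charge each edge to an endpoint `v` nearest to `i`, where `z(e) ≤ c^ρ(i,v) / η(0)`.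
Every vertex is charged at most `deg v ≤ d` times, so `∑ z ≤ (d / η(0)) ∑_v c^ρ(i,v)`, and
grouping the vertices by their distance to `i` turns the last sum into `M`; this regrouping
needs the spheres around `i` to be finite, which holds as `G` is connected and locally finite.
-/

/-- Distance from a vertex `i` to an (undirected) edge: the minimum of the distances
to its endpoints. -/
noncomputable def edgeDist {V : Type*} (G : SimpleGraph V) (i : V) : Sym2 V → ℕ :=
  Sym2.lift ⟨fun u v => min (G.dist i u) (G.dist i v), fun u v => min_comm _ _⟩

theorem hasSum_comp_of_hasSum_mul_ncard {V β : Type*} {D : V → β} (hD : ∀ r, {j | D j = r}.Finite)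
    {g : β → ℝ} (hg : ∀ r, 0 ≤ g r) {M : ℝ}
    (hM : HasSum (fun r => g r * ({j | D j = r}.ncard : ℝ)) M) :
    HasSum (fun j => g (D j)) M := by
  have hfiber : ∀ r, ∑' j : {j | D j = r}, g (D j) = g r * ({j | D j = r}.ncard : ℝ) := by
    intro r
    rw [tsum_congr fun j : {j | D j = r} => congrArg g j.2, tsum_const, nsmul_eq_mul,
      Nat.card_coe_set_eq, mul_comm]
  have hsum : Summable fun j => g (D j) := by
    rw [summable_partition (fun _ => hg _) (s := fun r => {j | D j = r})
      fun j => ⟨D j, rfl, fun _ h => h.symm⟩]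
    refine ⟨fun r => ?_, ?_⟩
    · have := (hD r).to_subtype
      exact Summable.of_finite
    · simpa only [hfiber] using hM.summable
  have hfiberwise : HasSum (fun r => g r * ({j | D j = r}.ncard : ℝ)) (∑' j, g (D j)) := by
    simp only [← hfiber]
    exact hsum.hasSum.tsum_fiberwise D
  exact hM.unique hfiberwise ▸ hsum.hasSum

namespace SimpleGraph

variable {V : Type*} {G : SimpleGraph V}

theorem Preconnected.finite_setOf_dist_le [G.LocallyFinite] (hconn : G.Preconnected) (i : V) :
    ∀ r : ℕ, {j | G.dist i j ≤ r}.Finite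
  | 0 => (Set.finite_singleton i).subset fun j hj =>
      ((hconn i j).dist_eq_zero_iff.mp (Nat.le_zero.mp hj)).symm
  | r + 1 => by
    refine ((hconn.finite_setOf_dist_le i r).biUnion fun k _ => (G.neighborSet k).toFinite).union
      (hconn.finite_setOf_dist_le i r) |>.subset fun j hj => ?_
    rcases Nat.lt_or_eq_of_le hj with hlt | heq
    · exact Or.inr (Nat.le_of_lt_succ hlt)
    obtain ⟨p, hp⟩ := (hconn j i).exists_walk_length_eq_dist
    cases p with
    | nil => simp [dist_self] at heq
    | @cons _ k _ hjk q =>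
      refine Or.inl (Set.mem_biUnion (x := k) ?_ hjk.symm)
      have := G.dist_le q
      simp only [Walk.length_cons, dist_comm (u := j), heq] at hp
      simp only [Set.mem_ofPred_eq, dist_comm (u := i)]
      omega

theorem Preconnected.hasSum_comp_dist [G.LocallyFinite] (hconn : G.Preconnected) (i : V)
    {g : ℕ → ℝ} (hg : ∀ r, 0 ≤ g r) {M : ℝ}
    (hM : HasSum (fun r => g r * ({j | G.dist i j = r}.ncard : ℝ)) M) :
    HasSum (fun j => g (G.dist i j)) M :=
  hasSum_comp_of_hasSum_mul_ncard
    (fun r => (hconn.finite_setOf_dist_le i r).subset fun _ hj => hj.le) hg hM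

theorem Adj.edgeDist_le_edgeDist_add_one {u v : V} (huv : G.Adj u v) (i w : V) :
    edgeDist G i s(u, w) ≤ edgeDist G i s(u, v) + 1 := by
  have := huv.symm.diff_dist_adj (u := i)
  simp only [edgeDist, Sym2.lift_mk]
  omega

theorem exists_mem_edgeDist_eq (G : SimpleGraph V) (i : V) (e : Sym2 V) :
    ∃ v ∈ e, edgeDist G i e = G.dist i v := by
  induction e using Sym2.ind with
  | _ u v =>
    rcases min_choice (G.dist i u) (G.dist i v) with h | h
    · exact ⟨u, Sym2.mem_mk_left u v, h⟩
    · exact ⟨v, Sym2.mem_mk_right u v, h⟩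

theorem exists_injective_sigma_neighborSet {h : Sym2 V → ℝ} {φ : V → ℝ}
    (hle : ∀ e ∈ G.edgeSet, ∃ v ∈ e, h e ≤ φ v) :
    ∃ F : G.edgeSet → Σ v, G.neighborSet v, F.Injective ∧ ∀ e : G.edgeSet, h e ≤ φ (F e).1 := by
  have hdart : ∀ e : G.edgeSet, ∃ p : Σ v, G.neighborSet v, s(p.1, p.2) = e ∧ h e ≤ φ p.1 := by
    rintro ⟨e, he⟩
    obtain ⟨v, hv, hφ⟩ := hle e he
    refine ⟨⟨v, Sym2.Mem.other hv, ?_⟩, Sym2.other_spec hv, hφ⟩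
    rw [mem_neighborSet, ← mem_edgeSet, Sym2.other_spec hv]
    exact he
  choose F hFe hFφ using hdart
  refine ⟨F, fun e₁ e₂ h₁₂ => Subtype.ext ?_, hFφ⟩
  rw [← hFe e₁, ← hFe e₂, h₁₂]

variable [G.LocallyFinite]

theorem hasSum_sigma_neighborSet {φ : V → ℝ} (hφ : ∀ v, 0 ≤ φ v)
    (hs : Summable fun v => (G.degree v : ℝ) * φ v) :
    HasSum (fun p : Σ v, G.neighborSet v => φ p.1) (∑' v, (G.degree v : ℝ) * φ v) := by
  have hfiber : ∀ v, ∑' _ : G.neighborSet v, φ v = G.degree v * φ v := fun v => by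
    rw [tsum_const, Nat.card_eq_fintype_card, card_neighborSet_eq_degree, nsmul_eq_mul]
  have hsum : Summable fun p : Σ v, G.neighborSet v => φ p.1 := by
    rw [summable_sigma_of_nonneg fun _ => hφ _]
    exact ⟨fun _ => Summable.of_finite, by simpa only [hfiber] using hs⟩
  simpa only [hsum.tsum_sigma, hfiber] using hsum.hasSum

theorem summable_degree_mul {d : ℕ} (hdeg : ∀ v, G.degree v ≤ d) {φ : V → ℝ} (hφ : ∀ v, 0 ≤ φ v)
    (hs : Summable φ) : Summable fun v => (G.degree v : ℝ) * φ v :=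
  (hs.mul_left (d : ℝ)).of_nonneg_of_le (fun v => mul_nonneg (Nat.cast_nonneg _) (hφ v))
    fun v => mul_le_mul_of_nonneg_right (Nat.cast_le.mpr (hdeg v)) (hφ v)

theorem summable_edgeSet_of_le_endpoint {d : ℕ} (hdeg : ∀ v, G.degree v ≤ d) {h : Sym2 V → ℝ}
    {φ : V → ℝ} (hh : ∀ e ∈ G.edgeSet, 0 ≤ h e) (hφ : ∀ v, 0 ≤ φ v)
    (hle : ∀ e ∈ G.edgeSet, ∃ v ∈ e, h e ≤ φ v) (hs : Summable φ) :
    Summable fun e : G.edgeSet => h e := by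
  obtain ⟨F, hF, hFφ⟩ := exists_injective_sigma_neighborSet hle
  exact ((hasSum_sigma_neighborSet hφ (summable_degree_mul hdeg hφ hs)).summable.comp_injective
    hF).of_nonneg_of_le (fun e => hh e e.2) hFφ

theorem tsum_edgeSet_le_of_le_endpoint {d : ℕ} (hdeg : ∀ v, G.degree v ≤ d) {h : Sym2 V → ℝ}
    {φ : V → ℝ} (hh : ∀ e ∈ G.edgeSet, 0 ≤ h e) (hφ : ∀ v, 0 ≤ φ v)
    (hle : ∀ e ∈ G.edgeSet, ∃ v ∈ e, h e ≤ φ v) (hs : Summable φ) :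
    ∑' e : G.edgeSet, h e ≤ d * ∑' v, φ v := by
  obtain ⟨F, hF, hFφ⟩ := exists_injective_sigma_neighborSet hle
  have hdarts := hasSum_sigma_neighborSet hφ (summable_degree_mul hdeg hφ hs)
  calc ∑' e : G.edgeSet, h e
      ≤ ∑' p : Σ v, G.neighborSet v, φ p.1 :=
        (summable_edgeSet_of_le_endpoint hdeg hh hφ hle hs).tsum_le_tsum_of_inj F hF
          (fun p _ => hφ p.1) hFφ hdarts.summable
    _ = ∑' v, (G.degree v : ℝ) * φ v := hdarts.tsum_eq
    _ ≤ ∑' v, (d : ℝ) * φ v :=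
        (summable_degree_mul hdeg hφ hs).tsum_le_tsum
          (fun v => mul_le_mul_of_nonneg_right (Nat.cast_le.mpr (hdeg v)) (hφ v))
          (hs.mul_left (d : ℝ))
    _ = d * ∑' v, φ v := tsum_mul_left

end SimpleGraph

section Weight

variable {c : ℝ} {η : ℕ → ℝ}

theorem antitone_pow_mul (hc : 0 ≤ c) (hcη : ∀ r, c ≤ η r) (hη : ∀ r, η r ≤ 1) :
    Antitone fun r => c ^ r * η r :=
  antitone_nat_of_succ_le fun r => calc
    c ^ (r + 1) * η (r + 1) = c ^ r * (c * η (r + 1)) := by ring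
    _ ≤ c ^ r * η r :=
      mul_le_mul_of_nonneg_left ((mul_le_of_le_one_right hc (hη _)).trans (hcη r)) (pow_nonneg hc r)

theorem pow_mul_lt_inv_mul_pow_mul (hc : 0 < c) (hηmono : StrictMono η) (hcη : ∀ r, c ≤ η r)
    (hη : ∀ r, η r ≤ 1) {r s : ℕ} (hs : s ≤ r + 1) : c ^ r * η r < c⁻¹ * (c ^ s * η s) :=
  calc c ^ r * η r
      < c ^ r * η (r + 1) := mul_lt_mul_of_pos_left (hηmono r.lt_succ_self) (pow_pos hc r)
    _ = c⁻¹ * (c ^ (r + 1) * η (r + 1)) := by field_simp; ring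
    _ ≤ c⁻¹ * (c ^ s * η s) :=
      mul_le_mul_of_nonneg_left (antitone_pow_mul hc.le hcη hη hs) (inv_nonneg.mpr hc.le)

end Weight

/-- If `M = ∑_r ((d+1)/(d-1))^{-r} n_r(G,i) < ∞`, then, with
`a = (d+1)/(d-1)` and any monotone increasing `η : ℕ → (1/a, 1)`, the weighting
`z(e) = a^{-ρ(i,e)} η(ρ(i,e))/η(0)` is a `d`-legal edge weighting with values in `(0,1]`
and `∑_{e∈E} z(e) ≤ (d/η(0))·M`; in particular `G` admits a summable `d`-legal edge
weighting. -/
theorem stmt_6 {V : Type*} (G : SimpleGraph V) [∀ v : V, Fintype (G.neighborSet v)]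
    (hconn : G.Connected)
    (d : ℕ) (hd : 3 ≤ d) (hdeg : ∀ v, G.degree v ≤ d)
    (i : V) (M : ℝ)
    (hM : HasSum (fun r : ℕ =>
      (((d : ℝ) - 1) / ((d : ℝ) + 1)) ^ r * ({j | G.dist i j = r}.ncard : ℝ)) M)
    (η : ℕ → ℝ) (hηmono : StrictMono η)
    (hηrange : ∀ r, ((d : ℝ) - 1) / ((d : ℝ) + 1) < η r ∧ η r < 1) :
    -- the explicit weighting
    letI a : ℝ := ((d : ℝ) + 1) / ((d : ℝ) - 1)
    letI z : Sym2 V → ℝ := fun e => a ^ (-(edgeDist G i e : ℤ)) * η (edgeDist G i e) / η 0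
    -- it takes values in (0,1]
    (∀ e ∈ G.edgeSet, 0 < z e ∧ z e ≤ 1) ∧
    -- it is d-legal: adjacent edges have weight ratio < a
    (∀ u v w : V, G.Adj u v → G.Adj u w → z s(u, v) / z s(u, w) < a) ∧
    -- it is summable, with the stated bound
    Summable (fun e : G.edgeSet => z (e : Sym2 V)) ∧
    (∑' e : G.edgeSet, z (e : Sym2 V)) ≤ ((d : ℝ) / η 0) * M := by
  set a : ℝ := ((d : ℝ) + 1) / ((d : ℝ) - 1)
  set z : Sym2 V → ℝ := fun e => a ^ (-(edgeDist G i e : ℤ)) * η (edgeDist G i e) / η 0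
  set c : ℝ := ((d : ℝ) - 1) / ((d : ℝ) + 1)
  have hd1 : (1 : ℝ) < d := by exact_mod_cast (by omega : 1 < d)
  have hc : 0 < c := div_pos (by linarith) (by linarith)
  have ha : a = c⁻¹ := (inv_div _ _).symm
  have hcη : ∀ r, c ≤ η r := fun r => (hηrange r).1.le
  have hη : ∀ r, η r ≤ 1 := fun r => (hηrange r).2.le
  have hη0 : 0 < η 0 := hc.trans (hηrange 0).1
  have hz : ∀ e, z e = c ^ edgeDist G i e * η (edgeDist G i e) / η 0 := fun e => by
    simp only [z, ha, zpow_neg, zpow_natCast, inv_pow, inv_inv]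
  have hz_pos : ∀ e, 0 < z e := fun e => by
    rw [hz]; exact div_pos (mul_pos (pow_pos hc _) (hc.trans (hηrange _).1)) hη0
  have hφ : HasSum (fun v => c ^ G.dist i v / η 0) (M / η 0) :=
    (hconn.preconnected.hasSum_comp_dist i (g := (c ^ ·)) (fun r => (pow_pos hc r).le) hM).div_const
      (η 0)
  have hφ_nonneg : ∀ v, 0 ≤ c ^ G.dist i v / η 0 := fun v => by positivity
  have hz_le : ∀ e ∈ G.edgeSet, ∃ v ∈ e, z e ≤ c ^ G.dist i v / η 0 := fun e _ => by
    obtain ⟨v, hv, he⟩ := G.exists_mem_edgeDist_eq i e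
    refine ⟨v, hv, ?_⟩
    rw [hz, ← he]
    gcongr
    exact mul_le_of_le_one_right (pow_nonneg hc.le _) (hη _)
  refine ⟨fun e _ => ⟨hz_pos e, ?_⟩, fun u v w huv _ => ?_,
    SimpleGraph.summable_edgeSet_of_le_endpoint hdeg (fun e _ => (hz_pos e).le) hφ_nonneg hz_le
      hφ.summable, ?_⟩
  · rw [hz, div_le_one hη0]
    simpa using antitone_pow_mul hc.le hcη hη (Nat.zero_le (edgeDist G i e))
  · rw [div_lt_iff₀ (hz_pos _), hz, hz, ha, mul_div_assoc']
    exact div_lt_div_of_pos_right (pow_mul_lt_inv_mul_pow_mul hc hηmono hcη hη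
      (huv.edgeDist_le_edgeDist_add_one i w)) hη0
  · calc ∑' e : G.edgeSet, z e
        ≤ d * ∑' v, c ^ G.dist i v / η 0 := SimpleGraph.tsum_edgeSet_le_of_le_endpoint hdeg
          (fun e _ => (hz_pos e).le) hφ_nonneg hz_le hφ.summable
      _ = d / η 0 * M := by rw [hφ.tsum_eq]; ring
end

section
/- Let G be a d-bounded degree graph with all degrees odd such that M = ∑_{r=0}^∞ ((d+1)/(d-1))^{-r} n_r(G,i) < ∞. Then in synchronous majority dynamics, for every vertex i, the number of times t for which A^i_{t+1} ≠ A^i_{t−1} is at most ((d+1)/(d-1)) · d · M. -/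
/-!
A Lyapunov argument with weights decaying geometrically away from `i`. Put
`q = (d - 1) / (d + 1)` and let the energy `E t` be the sum, over directed edges `(v, j)`, of
`q ^ max (dist i v) (dist i j)` times the indicator of `A t v ≠ A (t + 1) j`. Since the weights are
symmetric, `E (t + 1)` is the same sum for the pairs `A (t + 2) v`, `A (t + 1) j`, so
`E t - E (t + 1)` splits into contributions of single vertices `v`, which vanish unless
`A (t + 2) v ≠ A t v`. In that case `v` loses the weights of the neighbours agreeing with the
majority `A (t + 2) v` and gains those of the disagreeing ones. By oddness the former outnumber
the latter, and there are at most `(d - 1) / 2` of the latter, while the weights around `v` lie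
between `q ^ (r + 1)` and `q ^ r` for `r = dist i v`. The choice of `q` makes the contribution
nonnegative, and at least `q` at `v = i`, where all weights equal `q`. As `E 0 ≤ d * M`, there
are at most `d * M / q` times `t` with `A (t + 2) i ≠ A t i`.
-/

open Finset
open scoped ENNReal

theorem Int.one_le_majority_mul_sum {ι : Type*} {N : Finset ι} {b : ι → ℤ}
    (hb : ∀ j ∈ N, b j = 1 ∨ b j = -1) (hN : Odd #N) :
    1 ≤ (if 0 < ∑ j ∈ N, b j then 1 else -1) * ∑ j ∈ N, b j := by
  have hodd : Odd (∑ j ∈ N, b j) := by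
    rw [← ZMod.intCast_eq_one_iff_odd, Int.cast_sum, sum_congr rfl fun j hj =>
      show (b j : ZMod 2) = 1 by rcases hb j hj with h | h <;> simp [h]]
    simpa using hN.natCast_zmod_two
  have hne : ∑ j ∈ N, b j ≠ 0 := fun h => by simp [h] at hodd
  split_ifs <;> omega

theorem card_mul_sub_add_mul_sum_le_two_mul_sum_mul {ι : Type*} {N : Finset ι} {y : ι → ℤ}
    (hy : ∀ j ∈ N, y j = 1 ∨ y j = -1) {w : ι → ℝ} {ℓ h : ℝ} (hw : ∀ j ∈ N, w j ∈ Set.Icc ℓ h) :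
    #N * (ℓ - h) + (ℓ + h) * ∑ j ∈ N, (y j : ℝ) ≤ 2 * ∑ j ∈ N, w j * y j := by
  rw [← nsmul_eq_mul, ← sum_const, mul_sum, mul_sum, ← sum_add_distrib]
  refine sum_le_sum fun j hj => ?_
  obtain ⟨hℓ, hh⟩ := hw j hj
  rcases hy j hj with h | h <;> simp only [h] <;> push_cast <;> linarith

theorem le_majority_mul_sum_mul {ι : Type*} {N : Finset ι} {b : ι → ℤ}
    (hb : ∀ j ∈ N, b j = 1 ∨ b j = -1) (hN : Odd #N) {d : ℕ} (hNd : #N ≤ d)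
    {w : ι → ℝ} {ℓ h c : ℝ} (hw : ∀ j ∈ N, w j ∈ Set.Icc ℓ h) (hℓ : 0 ≤ ℓ)
    (hc : (d - 1) * h + 2 * c ≤ (d + 1) * ℓ) {s : ℤ}
    (hs : s = if 0 < ∑ j ∈ N, b j then 1 else -1) :
    c ≤ s * ∑ j ∈ N, w j * b j := by
  have hs1 : s = 1 ∨ s = -1 := by rw [hs]; split_ifs <;> simp
  have hsb : ∀ j ∈ N, s * b j = 1 ∨ s * b j = -1 := fun j hj => by
    rcases hs1 with h | h <;> rcases hb j hj with h' | h' <;> simp [h, h']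
  have hmargin : (1 : ℝ) ≤ ∑ j ∈ N, ((s * b j : ℤ) : ℝ) := by
    rw [← Int.cast_sum, ← mul_sum, hs]
    exact_mod_cast Int.one_le_majority_mul_sum hb hN
  obtain ⟨j₀, hj₀⟩ := card_pos.mp hN.pos
  have hℓh : ℓ ≤ h := (hw j₀ hj₀).1.trans (hw j₀ hj₀).2
  have hcard : (#N : ℝ) ≤ d := by exact_mod_cast hNd
  have key := card_mul_sub_add_mul_sum_le_two_mul_sum_mul hsb hw
  simp only [Int.cast_mul] at key hmargin
  rw [mul_sum]
  simp only [mul_left_comm (s : ℝ)] at key ⊢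
  nlinarith [mul_le_mul_of_nonneg_left hcard (sub_nonneg.mpr hℓh)]

theorem majority_local_energy_le {ι : Type*} {N : Finset ι} {b : ι → ℤ}
    (hb : ∀ j ∈ N, b j = 1 ∨ b j = -1) (hN : Odd #N) {d : ℕ} (hNd : #N ≤ d)
    {w : ι → ℝ} {ℓ h c : ℝ} (hw : ∀ j ∈ N, w j ∈ Set.Icc ℓ h) (hℓ : 0 ≤ ℓ)
    (hc : (d - 1) * h + 2 * c ≤ (d + 1) * ℓ) {a s : ℤ} (ha : a = 1 ∨ a = -1)
    (hs : s = if 0 < ∑ j ∈ N, b j then 1 else -1) :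
    ∑ j ∈ N, w j * (1 - s * b j) + c * (1 - s * a) ≤ ∑ j ∈ N, w j * (1 - a * b j) := by
  have hmargin := le_majority_mul_sum_mul hb hN hNd hw hℓ hc hs
  have hs1 : s = 1 ∨ s = -1 := by rw [hs]; split_ifs <;> simp
  have hdiff : ∑ j ∈ N, w j * (1 - a * b j) - ∑ j ∈ N, w j * (1 - s * b j)
      = (1 - s * a) * (s * ∑ j ∈ N, w j * b j) := by
    have hss : (s : ℝ) * s = 1 := by rcases hs1 with h | h <;> simp [h]
    rw [← sum_sub_distrib, mul_sum, mul_sum]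
    refine sum_congr rfl fun j _ => ?_
    linear_combination (w j * b j * a) * hss
  have hsa : (0 : ℝ) ≤ 1 - s * a := by
    rcases hs1 with h | h <;> rcases ha with h' | h' <;> simp [h, h']
  nlinarith

theorem ENNReal.tsum_comp_eq_tsum_encard_mul {β γ : Type*} (g : β → γ) (f : γ → ℝ≥0∞) :
    ∑' b, f (g b) = ∑' c, (g ⁻¹' {c}).encard * f c := by
  rw [← ENNReal.tsum_fiberwise _ g]
  refine tsum_congr fun c => ?_
  rw [← ENNReal.tsum_set_const]
  exact tsum_congr fun b => by rw [b.2]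

theorem ENNReal.tsum_le_of_forall_succ_add_le {E c : ℕ → ℝ≥0∞}
    (h : ∀ t, E (t + 1) + c t ≤ E t) : ∑' t, c t ≤ E 0 := by
  have htel (N : ℕ) : E N + ∑ t ∈ range N, c t ≤ E 0 := by
    induction N with
    | zero => simp
    | succ N ih =>
      calc E (N + 1) + ∑ t ∈ range (N + 1), c t = E (N + 1) + c N + ∑ t ∈ range N, c t := by
            rw [sum_range_succ, add_comm _ (c N), add_assoc]
        _ ≤ E 0 := (add_le_add_left (h N) _).trans ih
  exact ENNReal.tsum_le_of_sum_range_le fun N => le_add_self.trans (htel N)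

theorem Set.finite_and_ncard_mul_le_of_encard_mul_le {α : Type*} {S : Set α} {c B : ℝ}
    (hc : 0 < c) (hB : 0 ≤ B) (h : S.encard * ENNReal.ofReal c ≤ ENNReal.ofReal B) :
    S.Finite ∧ S.ncard * c ≤ B := by
  have hfin : S.Finite := by
    rw [← Set.encard_ne_top_iff]
    intro htop
    rw [htop, ENat.toENNReal_top, ENNReal.top_mul (by simpa using hc)] at h
    exact ENNReal.ofReal_ne_top (top_le_iff.mp h)
  refine ⟨hfin, ?_⟩
  rwa [← hfin.cast_ncard_eq, ENat.toENNReal_coe, ← ENNReal.ofReal_natCast,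
    ← ENNReal.ofReal_mul (by positivity), ENNReal.ofReal_le_ofReal_iff hB] at h

namespace SimpleGraph

variable {V : Type*} {G : SimpleGraph V}

variable (G) in
noncomputable def distWeight (i : V) (q : ℝ) (u v : V) : ℝ := q ^ max (G.dist i u) (G.dist i v)

theorem distWeight_comm (i : V) (q : ℝ) (u v : V) :
    G.distWeight i q u v = G.distWeight i q v u := by
  rw [distWeight, distWeight, max_comm]

theorem Connected.distWeight_mem_Icc (hG : G.Connected) (i : V) {q : ℝ} (hq0 : 0 ≤ q)
    (hq1 : q ≤ 1) {v j : V} (hadj : G.Adj v j) :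
    G.distWeight i q v j ∈ Set.Icc (q ^ (G.dist i v + 1)) (q ^ max (G.dist i v) 1) := by
  have hj : G.dist i j ≤ G.dist i v + 1 := by
    simpa [dist_eq_one_iff_adj.mpr hadj] using hadj.reachable.dist_triangle_right i
  have hvj : 1 ≤ max (G.dist i v) (G.dist i j) := by
    by_contra! h
    have hv := (hG i v).dist_eq_zero_iff.mp (by omega)
    have hj := (hG i j).dist_eq_zero_iff.mp (by omega)
    exact hadj.ne (hv.symm.trans hj)
  exact ⟨pow_le_pow_of_le_one hq0 hq1 (by omega), pow_le_pow_of_le_one hq0 hq1 (by omega)⟩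

section LocallyFinite

variable [G.LocallyFinite]

theorem Connected.finite_setOf_dist_le (hG : G.Connected) (i : V) (n : ℕ) :
    {j | G.dist i j ≤ n}.Finite := by
  induction n generalizing i with
  | zero =>
    refine (Set.finite_singleton i).subset fun j hj => ?_
    exact ((hG i j).dist_eq_zero_iff.mp (Nat.le_zero.mp hj)).symm
  | succ n ih =>
    refine ((Set.finite_singleton i).union
      ((G.neighborSet i).toFinite.biUnion fun v _ => ih v)).subset fun j hj => ?_
    obtain ⟨p, hp⟩ := (hG i j).exists_walk_length_eq_dist
    cases p with
    | nil => exact Or.inl rfl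
    | cons hadj p =>
      refine Or.inr (Set.mem_biUnion hadj ?_)
      have := G.dist_le p
      simp only [Walk.length_cons, Set.mem_ofPred_eq] at hp hj ⊢
      omega

theorem Connected.tsum_ofReal_pow_dist (hG : G.Connected) (i : V) {q : ℝ} (hq : 0 ≤ q)
    {M : ℝ} (hM : HasSum (fun r : ℕ => q ^ r * ({j | G.dist i j = r}.ncard : ℝ)) M) :
    ∑' v, ENNReal.ofReal (q ^ G.dist i v) = ENNReal.ofReal M := by
  rw [ENNReal.tsum_comp_eq_tsum_encard_mul (G.dist i) (fun r => ENNReal.ofReal (q ^ r)),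
    ← hM.tsum_eq, ENNReal.ofReal_tsum_of_nonneg (fun r => by positivity) hM.summable]
  refine tsum_congr fun r => ?_
  have hfin : {j | G.dist i j = r}.Finite :=
    (hG.finite_setOf_dist_le i r).subset fun j hj => le_of_eq hj
  rw [ENNReal.ofReal_mul (by positivity), ENNReal.ofReal_natCast, mul_comm,
    ← ENat.toENNReal_coe, hfin.cast_ncard_eq]
  rfl

theorem tsum_sum_neighborFinset_comm (F : V → V → ℝ≥0∞) :
    ∑' v, ∑ j ∈ G.neighborFinset v, F v j = ∑' v, ∑ j ∈ G.neighborFinset v, F j v := by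
  classical
  have h (f : V → V → ℝ≥0∞) (v : V) :
      ∑ j ∈ G.neighborFinset v, f v j = ∑' j, if G.Adj v j then f v j else 0 := by
    rw [sum_eq_tsum_indicator]
    exact tsum_congr fun j => by simp [Set.indicator_apply]
  rw [tsum_congr (h F), tsum_congr (h fun a b => F b a), ENNReal.tsum_comm]
  exact tsum_congr fun v => tsum_congr fun j => by rw [G.adj_comm]

variable (G) in
/-- For spins `±1`, the factor `1 - x v * y j` is twice the indicator of `x v ≠ y j`. -/
noncomputable def spinEnergy (w : V → V → ℝ) (x y : V → ℤ) : ℝ≥0∞ :=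
  ∑' v, ∑ j ∈ G.neighborFinset v, ENNReal.ofReal (w v j * (1 - x v * y j))

theorem spinEnergy_comm {w : V → V → ℝ} (hw : ∀ u v, w u v = w v u) (x y : V → ℤ) :
    G.spinEnergy w x y = G.spinEnergy w y x := by
  rw [spinEnergy, tsum_sum_neighborFinset_comm]
  simp only [spinEnergy, hw, mul_comm (x _ : ℝ)]

theorem spinEnergy_le {w : V → V → ℝ} {B : V → ℝ}
    (hw : ∀ v j, G.Adj v j → w v j ∈ Set.Icc 0 (B v)) {d : ℕ} (hdeg : ∀ v, G.degree v ≤ d)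
    {x y : V → ℤ} (hx : ∀ v, x v = 1 ∨ x v = -1) (hy : ∀ v, y v = 1 ∨ y v = -1) :
    G.spinEnergy w x y ≤ 2 * d * ∑' v, ENNReal.ofReal (B v) := by
  rw [spinEnergy, ← ENNReal.tsum_mul_left]
  refine ENNReal.tsum_le_tsum fun v => ?_
  have hterm : ∀ j ∈ G.neighborFinset v,
      ENNReal.ofReal (w v j * (1 - x v * y j)) ≤ 2 * ENNReal.ofReal (B v) := fun j hj => by
    obtain ⟨hw0, hwB⟩ := hw v j ((G.mem_neighborFinset v j).mp hj)
    rw [← ENNReal.ofReal_ofNat 2, ← ENNReal.ofReal_mul zero_le_two]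
    refine ENNReal.ofReal_le_ofReal ?_
    rcases hx v with h | h <;> rcases hy j with h' | h' <;> simp only [h, h'] <;> push_cast <;>
      linarith
  calc ∑ j ∈ G.neighborFinset v, ENNReal.ofReal (w v j * (1 - x v * y j))
      ≤ G.degree v * (2 * ENNReal.ofReal (B v)) := by
        simpa [G.card_neighborFinset_eq_degree] using sum_le_card_nsmul _ _ _ hterm
    _ ≤ 2 * d * ENNReal.ofReal (B v) := by
        rw [mul_left_comm, ← mul_assoc]
        gcongr
        exact_mod_cast hdeg v

theorem spinEnergy_majority_add_le {w : V → V → ℝ} (hw_symm : ∀ u v, w u v = w v u)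
    {d : ℕ} (hodd : ∀ v, Odd (G.degree v)) (hdeg : ∀ v, G.degree v ≤ d)
    {ℓ h c : V → ℝ} (hw : ∀ v j, G.Adj v j → w v j ∈ Set.Icc (ℓ v) (h v))
    (hℓ : ∀ v, 0 ≤ ℓ v) (hc0 : ∀ v, 0 ≤ c v)
    (hc : ∀ v, (d - 1) * h v + 2 * c v ≤ (d + 1) * ℓ v)
    {x y z : V → ℤ} (hx : ∀ v, x v = 1 ∨ x v = -1) (hy : ∀ v, y v = 1 ∨ y v = -1)
    (hz : ∀ v, z v = if 0 < ∑ j ∈ G.neighborFinset v, y j then 1 else -1) :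
    G.spinEnergy w y z + ∑' v, ENNReal.ofReal (c v * (1 - z v * x v)) ≤
      G.spinEnergy w x y := by
  have hpm (a b : ℤ) (ha : a = 1 ∨ a = -1) (hb : b = 1 ∨ b = -1) : (0 : ℝ) ≤ 1 - a * b := by
    rcases ha with rfl | rfl <;> rcases hb with rfl | rfl <;> norm_num
  have hz1 (v : V) : z v = 1 ∨ z v = -1 := by rw [hz v]; split_ifs <;> simp
  rw [spinEnergy_comm hw_symm, spinEnergy, spinEnergy, ← ENNReal.tsum_add]
  refine ENNReal.tsum_le_tsum fun v => ?_
  have hwv (j : V) (hj : j ∈ G.neighborFinset v) := hw v j ((G.mem_neighborFinset v j).mp hj)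
  have hterm (a : ℤ) (ha : a = 1 ∨ a = -1) :
      ∀ j ∈ G.neighborFinset v, (0 : ℝ) ≤ w v j * (1 - a * y j) := fun j hj =>
    mul_nonneg ((hℓ v).trans (hwv j hj).1) (hpm a _ ha (hy j))
  have hN := G.card_neighborFinset_eq_degree v
  rw [← ENNReal.ofReal_sum_of_nonneg (hterm _ (hz1 v)), ← ENNReal.ofReal_add
      (sum_nonneg (hterm _ (hz1 v))) (mul_nonneg (hc0 v) (hpm _ _ (hz1 v) (hx v))),
    ← ENNReal.ofReal_sum_of_nonneg (hterm _ (hx v))]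
  exact ENNReal.ofReal_le_ofReal <| majority_local_energy_le (fun j _ => hy j) (hN ▸ hodd v)
    (hN ▸ hdeg v) hwv (hℓ v) (hc v) (hx v) (hz v)

theorem Connected.spinEnergy_distWeight_majority_add_le (hG : G.Connected) (i : V) {d : ℕ}
    (hodd : ∀ v, Odd (G.degree v)) (hdeg : ∀ v, G.degree v ≤ d) {q : ℝ} (hq0 : 0 ≤ q)
    (hq1 : q ≤ 1) (hqd : (d - 1 : ℝ) ≤ (d + 1) * q) {x y z : V → ℤ}
    (hx : ∀ v, x v = 1 ∨ x v = -1) (hy : ∀ v, y v = 1 ∨ y v = -1)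
    (hz : ∀ v, z v = if 0 < ∑ j ∈ G.neighborFinset v, y j then 1 else -1) :
    G.spinEnergy (G.distWeight i q) y z + ENNReal.ofReal (q * (1 - z i * x i)) ≤
      G.spinEnergy (G.distWeight i q) x y := by
  classical
  have hc : ∑' v, ENNReal.ofReal ((if v = i then q else 0) * (1 - z v * x v)) =
      ENNReal.ofReal (q * (1 - z i * x i)) := by
    rw [tsum_eq_single i fun v hv => by simp [hv], if_pos rfl]
  rw [← hc]
  refine spinEnergy_majority_add_le (distWeight_comm i q) hodd hdeg
    (fun v j hadj => hG.distWeight_mem_Icc i hq0 hq1 hadj) (fun v => by positivity)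
    (fun v => by split_ifs <;> simp [hq0]) (fun v => ?_) hx hy hz
  by_cases hv : v = i
  · subst hv
    norm_num
    linarith
  · have hρ : 1 ≤ G.dist i v :=
      Nat.one_le_iff_ne_zero.mpr fun h => hv ((hG i v).dist_eq_zero_iff.mp h).symm
    simp only [hv, if_false, max_eq_left hρ, pow_succ]
    nlinarith [mul_le_mul_of_nonneg_left hqd (pow_nonneg hq0 (G.dist i v))]

theorem Connected.majority_flips_finite_and_ncard_mul_le (hG : G.Connected) {d : ℕ}
    (hodd : ∀ v, Odd (G.degree v)) (hdeg : ∀ v, G.degree v ≤ d) {q : ℝ} (hq0 : 0 < q)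
    (hq1 : q ≤ 1) (hqd : (d - 1 : ℝ) ≤ (d + 1) * q) (i : V) {M : ℝ}
    (hM : HasSum (fun r : ℕ => q ^ r * ({j | G.dist i j = r}.ncard : ℝ)) M)
    {A : ℕ → V → ℤ} (hA0 : ∀ v, A 0 v = 1 ∨ A 0 v = -1)
    (hdyn : ∀ t v, A (t + 1) v = if 0 < ∑ j ∈ G.neighborFinset v, A t j then 1 else -1) :
    {t | A (t + 2) i ≠ A t i}.Finite ∧ {t | A (t + 2) i ≠ A t i}.ncard * q ≤ d * M := by
  have hA : ∀ t v, A t v = 1 ∨ A t v = -1 := by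
    rintro (_ | t) v
    · exact hA0 v
    · rw [hdyn t v]; split_ifs <;> simp
  set E : ℕ → ℝ≥0∞ := fun t => G.spinEnergy (G.distWeight i q) (A t) (A (t + 1))
  have hstep (t : ℕ) : E (t + 1) + ENNReal.ofReal (q * (1 - A (t + 2) i * A t i)) ≤ E t :=
    hG.spinEnergy_distWeight_majority_add_le i hodd hdeg hq0.le hq1 hqd (hA t) (hA (t + 1))
      (hdyn (t + 1))
  have hE0 : E 0 ≤ ENNReal.ofReal (2 * d * M) := by
    rw [ENNReal.ofReal_mul (p := 2 * d) (by positivity), ENNReal.ofReal_mul zero_le_two,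
      ENNReal.ofReal_ofNat, ENNReal.ofReal_natCast, ← hG.tsum_ofReal_pow_dist i hq0.le hM]
    refine spinEnergy_le (fun v j hadj => ?_) hdeg (hA 0) (hA 1)
    have hw := hG.distWeight_mem_Icc i hq0.le hq1 hadj
    exact ⟨(pow_nonneg hq0.le _).trans hw.1,
      hw.2.trans (pow_le_pow_of_le_one hq0.le hq1 (le_max_left _ _))⟩
  have hflip (t : ℕ) : ENNReal.ofReal (q * (1 - A (t + 2) i * A t i)) =
      {t | A (t + 2) i ≠ A t i}.indicator (fun _ => ENNReal.ofReal (2 * q)) t := by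
    rcases hA (t + 2) i with h | h <;> rcases hA t i with h' | h' <;>
      norm_num [h, h', ENNReal.ofReal_mul hq0.le, mul_comm]
  have hsum := (ENNReal.tsum_le_of_forall_succ_add_le hstep).trans hE0
  rw [tsum_congr hflip, ← _root_.tsum_subtype, ENNReal.tsum_set_const] at hsum
  obtain ⟨hfin, hcard⟩ := Set.finite_and_ncard_mul_le_of_encard_mul_le (by positivity)
    (mul_nonneg (by positivity) (hM.nonneg fun r => by positivity)) hsum
  exact ⟨hfin, by linarith⟩

end LocallyFinite

end SimpleGraph

/-- On a slow-growth graph with odd degrees at most `d`, where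
`M = ∑_r ((d+1)/(d-1))^{-r} n_r(G,i)`, the number of times `t` with
`A^i_{t+1} ≠ A^i_{t-1}` in synchronous majority dynamics is at most
`((d+1)/(d-1))·d·M`. (The time `t` of the claim is written `t+1` below.) -/
theorem stmt_8 {V : Type*} (G : SimpleGraph V) [∀ v : V, Fintype (G.neighborSet v)]
    (hconn : G.Connected)
    (d : ℕ) (hd : 3 ≤ d)
    (hodd : ∀ v, Odd (G.degree v)) (hdeg : ∀ v, G.degree v ≤ d)
    (i : V) (M : ℝ)
    (hM : HasSum (fun r : ℕ =>
      (((d : ℝ) - 1) / ((d : ℝ) + 1)) ^ r * ({j | G.dist i j = r}.ncard : ℝ)) M)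
    (A : ℕ → V → ℤ) (hA0 : ∀ v, A 0 v = 1 ∨ A 0 v = -1)
    (hdyn : ∀ t v, A (t + 1) v =
      if 0 < ∑ j ∈ G.neighborFinset v, A t j then 1 else -1) :
    {t : ℕ | A (t + 2) i ≠ A t i}.Finite ∧
    ({t : ℕ | A (t + 2) i ≠ A t i}.ncard : ℝ) ≤
      (((d : ℝ) + 1) / ((d : ℝ) - 1)) * d * M := by
  have hd' : (3 : ℝ) ≤ d := by exact_mod_cast hd
  set q : ℝ := (d - 1) / (d + 1) with hq
  have hq0 : 0 < q := div_pos (by linarith) (by linarith)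
  have hq1 : q ≤ 1 := (div_le_one (by linarith)).mpr (by linarith)
  have hqd : (d - 1 : ℝ) ≤ (d + 1) * q := by rw [hq, mul_div_cancel₀ _ (by linarith)]
  obtain ⟨hfin, hcard⟩ :=
    hconn.majority_flips_finite_and_ncard_mul_le hodd hdeg hq0 hq1 hqd i hM hA0 hdyn
  refine ⟨hfin, ?_⟩
  rw [show ((d : ℝ) + 1) / ((d : ℝ) - 1) * d * M = d * M / q by rw [hq]; field_simp,
    le_div_iff₀ hq0]
  exact hcard
end

section
/- In synchronous majority dynamics on an infinite, locally finite graph with all degrees odd, no finite set of vertices is a dynamic monopoly: for any finite W ⊆ V, if initially A^i_0 = +1 for all i ∈ W and A^i_0 = −1 for all i ∉ W, then it is not the case that every vertex's opinion eventually stabilizes at +1. In fact, only finitely many vertices ever take the opinion +1 at any time. -/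
/-!
Along a majority-dynamics trajectory `x₀, x₁, …` consider the Goles–Olivos functional
`E(xₜ, xₜ₊₁) = ∑_{i ∼ j} (1 - xₜ(i) xₜ₊₁(j))`, a finite nonnegative integer as long as only
finitely many vertices are `+1`. Swapping `i` and `j` in `E(xₜ₊₁, xₜ₊₂)` gives
`E(xₜ, xₜ₊₁) - E(xₜ₊₁, xₜ₊₂) = ∑ᵢ (xₜ₊₂(i) - xₜ(i)) Sᵢ`, where `Sᵢ` is the neighbour sum of `xₜ₊₁`
at `i`; since `xₜ₊₂(i)` is the sign of `Sᵢ`, every term is `≥ 0`, and when all degrees are odd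
`Sᵢ ≠ 0`, so the term is `≥ 2` wherever `xₜ₊₂(i) ≠ xₜ(i)`. Hence the trajectory is eventually
`2`-periodic: every vertex that is ever `+1` is `+1` at one of finitely many times, each with
finitely many `+1`'s, and on an infinite graph some vertex is never `+1`.
-/

open Finset

lemma exists_lt_add_two_eq_of_forall_ge {α : Type*} {f : ℕ → α} {T : ℕ}
    (hf : ∀ t ≥ T, f (t + 2) = f t) (t : ℕ) : ∃ s < T + 2, f s = f t := by
  induction t using Nat.strong_induction_on with
  | _ t ih =>
    by_cases ht : t < T + 2
    · exact ⟨t, ht, rfl⟩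
    · obtain ⟨s, hs, hfs⟩ := ih (t - 2) (by omega)
      refine ⟨s, hs, hfs.trans ?_⟩
      have := hf (t - 2) (by omega)
      rwa [show t - 2 + 2 = t by omega, eq_comm] at this

namespace SimpleGraph

variable {V : Type*} (G : SimpleGraph V) [∀ v, Fintype (G.neighborSet v)]

section NeighborSums

variable {M : Type*} [AddCommMonoid M] (P : Finset V) (f : V → V → M)

lemma support_sum_neighborFinset_subset [DecidableEq V] (hf : ∀ i j, i ∉ P → j ∉ P → f i j = 0) :
    Function.support (fun i ↦ ∑ j ∈ G.neighborFinset i, f i j) ⊆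
      ↑(P ∪ P.biUnion fun p ↦ G.neighborFinset p) := by
  intro i hi
  by_contra hiP
  simp only [coe_union, coe_biUnion, Set.mem_union, Set.mem_iUnion, mem_coe,
    not_or, not_exists] at hiP
  refine hi (sum_eq_zero fun j hj ↦ hf i j hiP.1 fun hjP ↦ ?_)
  exact hiP.2 j hjP (G.mem_neighborFinset j i |>.2 (G.mem_neighborFinset i j |>.1 hj).symm)

lemma sum_neighborFinset_eq_sum_ite [DecidableEq V] (hf : ∀ i j, i ∉ P → j ∉ P → f i j = 0)
    (i : V) :
    ∑ j ∈ G.neighborFinset i, f i j =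
      ∑ j ∈ P ∪ P.biUnion fun p ↦ G.neighborFinset p,
        if j ∈ G.neighborFinset i then f i j else 0 := by
  rw [← sum_filter]
  refine (sum_subset (fun j ↦ by simp) fun j hj hjs ↦ ?_).symm
  simp only [mem_filter, hj, and_true, mem_union, mem_biUnion, not_or, not_exists,
    not_and] at hjs
  exact hf i j (fun hiP ↦ hjs.2 i hiP hj) hjs.1

lemma hasFiniteSupport_sum_neighborFinset (hf : ∀ i j, i ∉ P → j ∉ P → f i j = 0) :
    Function.HasFiniteSupport (fun i ↦ ∑ j ∈ G.neighborFinset i, f i j) := by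
  classical
  exact (finite_toSet _).subset (G.support_sum_neighborFinset_subset P f hf)

lemma finsum_sum_neighborFinset_comm (hf : ∀ i j, i ∉ P → j ∉ P → f i j = 0) :
    ∑ᶠ i, ∑ j ∈ G.neighborFinset i, f i j = ∑ᶠ i, ∑ j ∈ G.neighborFinset i, f j i := by
  classical
  have hf' : ∀ i j, i ∉ P → j ∉ P → f j i = 0 := fun i j hi hj ↦ hf j i hj hi
  rw [finsum_eq_finsetSum_of_support_subset _ (G.support_sum_neighborFinset_subset P f hf),
    finsum_eq_finsetSum_of_support_subset _
      (G.support_sum_neighborFinset_subset P (fun i j ↦ f j i) hf')]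
  simp only [G.sum_neighborFinset_eq_sum_ite P f hf,
    G.sum_neighborFinset_eq_sum_ite P (fun i j ↦ f j i) hf']
  rw [sum_comm]
  refine sum_congr rfl fun i _ ↦ sum_congr rfl fun j _ ↦ ?_
  exact if_congr (by rw [G.mem_neighborFinset, G.mem_neighborFinset, G.adj_comm]) rfl rfl

end NeighborSums

def majority (x : V → ℤ) (v : V) : ℤ :=
  if 0 < ∑ j ∈ G.neighborFinset v, x j then 1 else -1

lemma majority_eq_one_or_eq_neg_one (x : V → ℤ) (v : V) :
    G.majority x v = 1 ∨ G.majority x v = -1 := by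
  unfold majority
  split_ifs <;> simp

lemma exists_adj_eq_one_of_majority_eq_one {x : V → ℤ} (hx : ∀ v, x v = 1 ∨ x v = -1) {v : V}
    (hv : G.majority x v = 1) : ∃ j, G.Adj v j ∧ x j = 1 := by
  by_contra! h
  have hle : ∑ j ∈ G.neighborFinset v, x j ≤ 0 := sum_nonpos fun j hj ↦ by
    rcases hx j with hj1 | hj1
    · exact absurd hj1 (h j ((G.mem_neighborFinset v j).1 hj))
    · omega
  simp [majority, not_lt.2 hle] at hv

lemma finite_setOf_majority_eq_one {x : V → ℤ} (hx : ∀ v, x v = 1 ∨ x v = -1)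
    (hfin : {v | x v = 1}.Finite) : {v | G.majority x v = 1}.Finite := by
  refine (hfin.biUnion fun j _ ↦ (G.neighborSet j).toFinite).subset fun v hv ↦ ?_
  obtain ⟨j, hvj, hj⟩ := G.exists_adj_eq_one_of_majority_eq_one hx hv
  exact Set.mem_biUnion hj hvj.symm

lemma sum_neighborFinset_ne_zero {x : V → ℤ} (hx : ∀ v, x v = 1 ∨ x v = -1) {v : V}
    (hodd : Odd (G.degree v)) : ∑ j ∈ G.neighborFinset v, x j ≠ 0 := by
  have hmod : (∑ j ∈ G.neighborFinset v, x j) % 2 = (G.degree v : ℤ) % 2 := by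
    have hxj : ∀ j, x j % 2 = 1 := fun j ↦ by rcases hx j with h | h <;> simp [h]
    rw [sum_int_mod, sum_congr rfl fun j _ ↦ hxj j, sum_const, nsmul_one,
      card_neighborFinset_eq_degree]
  obtain ⟨k, hk⟩ := hodd
  intro h0
  rw [h0, hk] at hmod
  omega

lemma majority_sub_mul_sum_nonneg {x y : V → ℤ} (hx : ∀ v, x v = 1 ∨ x v = -1) (v : V) :
    0 ≤ (G.majority y v - x v) * ∑ j ∈ G.neighborFinset v, y j := by
  unfold majority
  split_ifs with h <;> rcases hx v with hv | hv <;> rw [hv] <;> nlinarith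

lemma two_le_majority_sub_mul_sum {x y : V → ℤ} (hx : ∀ v, x v = 1 ∨ x v = -1)
    (hy : ∀ v, y v = 1 ∨ y v = -1) {v : V} (hodd : Odd (G.degree v))
    (hv : G.majority y v ≠ x v) :
    2 ≤ (G.majority y v - x v) * ∑ j ∈ G.neighborFinset v, y j := by
  have hS := G.sum_neighborFinset_ne_zero hy hodd
  unfold majority at hv ⊢
  split_ifs at hv ⊢ with h <;> rcases hx v with hxv | hxv <;> rw [hxv] at hv ⊢ <;>
    first | exact absurd rfl hv | omega

/-- The Goles–Olivos Lyapunov functional `-∑_{i ∼ j} x i * y j`, shifted by the number of darts so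
that it is finite (and nonnegative) for `±1` configurations with finitely many `+1`'s. -/
noncomputable def pairEnergy (x y : V → ℤ) : ℤ :=
  ∑ᶠ i, ∑ j ∈ G.neighborFinset i, (1 - x i * y j)

lemma pairEnergy_nonneg {x y : V → ℤ} (hx : ∀ v, x v = 1 ∨ x v = -1)
    (hy : ∀ v, y v = 1 ∨ y v = -1) : 0 ≤ G.pairEnergy x y :=
  finsum_nonneg fun i ↦ sum_nonneg fun j _ ↦ by
    rcases hx i with h | h <;> rcases hy j with h' | h' <;> simp [h, h']

lemma pairEnergy_sub_pairEnergy (P : Finset V) {x y z : V → ℤ} (hx : ∀ v ∉ P, x v = -1)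
    (hy : ∀ v ∉ P, y v = -1) (hz : ∀ v ∉ P, z v = -1) :
    G.pairEnergy x y - G.pairEnergy y z =
      ∑ᶠ i, (z i - x i) * ∑ j ∈ G.neighborFinset i, y j := by
  have hxy : ∀ i j, i ∉ P → j ∉ P → 1 - x i * y j = 0 := fun i j hi hj ↦ by
    simp [hx i hi, hy j hj]
  have hyz : ∀ i j, i ∉ P → j ∉ P → 1 - y i * z j = 0 := fun i j hi hj ↦ by
    simp [hy i hi, hz j hj]
  have hzy : ∀ i j, i ∉ P → j ∉ P → 1 - y j * z i = 0 := fun i j hi hj ↦ hyz j i hj hi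
  rw [pairEnergy, pairEnergy, G.finsum_sum_neighborFinset_comm P _ hyz,
    ← finsum_sub_distrib (G.hasFiniteSupport_sum_neighborFinset P _ hxy)
      (G.hasFiniteSupport_sum_neighborFinset P _ hzy)]
  refine finsum_congr fun i ↦ ?_
  rw [← sum_sub_distrib, mul_sum]
  exact sum_congr rfl fun j _ ↦ by ring

lemma exists_finset_forall_notMem_eq_neg_one {x : V → ℤ} (hx : ∀ v, x v = 1 ∨ x v = -1)
    (hfin : {v | x v = 1}.Finite) : ∃ P : Finset V, ∀ v ∉ P, x v = -1 :=
  ⟨hfin.toFinset, fun v hv ↦ (hx v).resolve_left (by simpa using hv)⟩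

section Majority

variable {x y : V → ℤ}

lemma pairEnergy_sub_pairEnergy_majority (hx : ∀ v, x v = 1 ∨ x v = -1)
    (hy : ∀ v, y v = 1 ∨ y v = -1) (hxfin : {v | x v = 1}.Finite) (hyfin : {v | y v = 1}.Finite) :
    G.pairEnergy x y - G.pairEnergy y (G.majority y) =
      ∑ᶠ i, (G.majority y i - x i) * ∑ j ∈ G.neighborFinset i, y j := by
  classical
  obtain ⟨P, hP⟩ := exists_finset_forall_notMem_eq_neg_one hx hxfin
  obtain ⟨Q, hQ⟩ := exists_finset_forall_notMem_eq_neg_one hy hyfin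
  obtain ⟨R, hR⟩ := exists_finset_forall_notMem_eq_neg_one (G.majority_eq_one_or_eq_neg_one y)
    (G.finite_setOf_majority_eq_one hy hyfin)
  refine G.pairEnergy_sub_pairEnergy (P ∪ Q ∪ R) (fun v hv ↦ ?_) (fun v hv ↦ ?_) fun v hv ↦ ?_
  all_goals simp only [mem_union, not_or] at hv
  exacts [hP v hv.1.1, hQ v hv.1.2, hR v hv.2]

lemma pairEnergy_majority_le (hx : ∀ v, x v = 1 ∨ x v = -1) (hy : ∀ v, y v = 1 ∨ y v = -1)
    (hxfin : {v | x v = 1}.Finite) (hyfin : {v | y v = 1}.Finite) :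
    G.pairEnergy y (G.majority y) ≤ G.pairEnergy x y := by
  rw [← sub_nonneg, G.pairEnergy_sub_pairEnergy_majority hx hy hxfin hyfin]
  exact finsum_nonneg fun i ↦ G.majority_sub_mul_sum_nonneg hx i

lemma pairEnergy_majority_add_two_le (hodd : ∀ v, Odd (G.degree v))
    (hx : ∀ v, x v = 1 ∨ x v = -1) (hy : ∀ v, y v = 1 ∨ y v = -1)
    (hxfin : {v | x v = 1}.Finite) (hyfin : {v | y v = 1}.Finite) (hne : G.majority y ≠ x) :
    G.pairEnergy y (G.majority y) + 2 ≤ G.pairEnergy x y := by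
  obtain ⟨v, hv⟩ := Function.ne_iff.1 hne
  have hsupp : Function.HasFiniteSupport
      fun i ↦ (G.majority y i - x i) * ∑ j ∈ G.neighborFinset i, y j := by
    refine (hxfin.union (G.finite_setOf_majority_eq_one hy hyfin)).subset fun i hi ↦ ?_
    by_contra hi'
    simp only [Set.mem_union, Set.mem_ofPred_eq, not_or] at hi'
    rw [Function.mem_support, (hx i).resolve_left hi'.1,
      (G.majority_eq_one_or_eq_neg_one y i).resolve_left hi'.2, sub_self, zero_mul] at hi
    exact hi rfl
  have := single_le_finsum v hsupp fun i ↦ G.majority_sub_mul_sum_nonneg hx i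
  have := G.two_le_majority_sub_mul_sum hx hy (hodd v) hv
  linarith [G.pairEnergy_sub_pairEnergy_majority hx hy hxfin hyfin]

end Majority

section Orbit

variable {x : ℕ → V → ℤ}

lemma orbit_eq_one_or_eq_neg_one (hstep : ∀ t, x (t + 1) = G.majority (x t))
    (h0 : ∀ v, x 0 v = 1 ∨ x 0 v = -1) (t : ℕ) (v : V) : x t v = 1 ∨ x t v = -1 := by
  cases t with
  | zero => exact h0 v
  | succ t => rw [hstep]; exact G.majority_eq_one_or_eq_neg_one _ v

lemma orbit_finite_setOf_eq_one (hstep : ∀ t, x (t + 1) = G.majority (x t))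
    (h0 : ∀ v, x 0 v = 1 ∨ x 0 v = -1) (h0fin : {v | x 0 v = 1}.Finite) (t : ℕ) :
    {v | x t v = 1}.Finite := by
  induction t with
  | zero => exact h0fin
  | succ t ih =>
    rw [hstep]
    exact G.finite_setOf_majority_eq_one (G.orbit_eq_one_or_eq_neg_one hstep h0 t) ih

theorem exists_orbit_add_two_eq (hodd : ∀ v, Odd (G.degree v))
    (hstep : ∀ t, x (t + 1) = G.majority (x t)) (h0 : ∀ v, x 0 v = 1 ∨ x 0 v = -1)
    (h0fin : {v | x 0 v = 1}.Finite) : ∃ T, ∀ t ≥ T, x (t + 2) = x t := by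
  have hspin := G.orbit_eq_one_or_eq_neg_one hstep h0
  have hfin := G.orbit_finite_setOf_eq_one hstep h0 h0fin
  let e t := G.pairEnergy (x t) (x (t + 1))
  have hle : ∀ t, e (t + 1) ≤ e t := fun t ↦ by
    change G.pairEnergy _ (x (t + 1 + 1)) ≤ _
    rw [hstep (t + 1)]
    exact G.pairEnergy_majority_le (hspin t) (hspin _) (hfin t) (hfin _)
  have hlt : ∀ t, x (t + 2) ≠ x t → e (t + 1) + 2 ≤ e t := fun t hne ↦ by
    change G.pairEnergy _ (x (t + 1 + 1)) + 2 ≤ _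
    rw [hstep (t + 1)] at hne ⊢
    exact G.pairEnergy_majority_add_two_le hodd (hspin t) (hspin _) (hfin t) (hfin _) hne
  have he0 : ∀ t, 0 ≤ e t := fun t ↦ G.pairEnergy_nonneg (hspin t) (hspin (t + 1))
  obtain ⟨T, hT⟩ := WellFoundedLT.antitone_chain_condition
    (f := fun t ↦ (e t).toNat) (antitone_nat_of_succ_le fun t ↦ Int.toNat_le_toNat (hle t))
  refine ⟨T, fun t ht ↦ by_contra fun hne ↦ ?_⟩
  have hconst := hT t ht
  have hconst' := hT (t + 1) (by omega)
  have hdrop := hlt t hne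
  have := he0 t
  have := he0 (t + 1)
  omega

end Orbit

end SimpleGraph

/-- No dynamic monopolies on infinite graphs. In synchronous majority
dynamics on an infinite, connected, locally finite graph with all degrees odd, starting
from `+1` exactly on a finite set `W`, only finitely many vertices ever hold the opinion
`+1`; in particular, it is not the case that every vertex's opinion stabilizes at `+1`. -/
theorem stmt_10 {V : Type*} [Infinite V] [DecidableEq V] (G : SimpleGraph V)
    [∀ v : V, Fintype (G.neighborSet v)]
    (hconn : G.Connected) (hodd : ∀ v, Odd (G.degree v))
    (W : Finset V)
    (A : ℕ → V → ℤ)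
    (hA0 : ∀ v, A 0 v = if v ∈ W then 1 else -1)
    (hdyn : ∀ t v, A (t + 1) v =
      if 0 < ∑ j ∈ G.neighborFinset v, A t j then 1 else -1) :
    {v : V | ∃ t : ℕ, A t v = 1}.Finite ∧
    ¬ (∀ v : V, ∃ T : ℕ, ∀ t : ℕ, T ≤ t → A t v = 1) := by
  have hstep : ∀ t, A (t + 1) = G.majority (A t) := fun t ↦ funext (hdyn t)
  have h0 : ∀ v, A 0 v = 1 ∨ A 0 v = -1 := fun v ↦ by rw [hA0]; split_ifs <;> simp
  have h0fin : {v | A 0 v = 1}.Finite :=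
    W.finite_toSet.subset fun v hv ↦ by by_contra h; simp [hA0, h] at hv
  have hfin := G.orbit_finite_setOf_eq_one hstep h0 h0fin
  obtain ⟨T, hT⟩ := G.exists_orbit_add_two_eq hodd hstep h0 h0fin
  have hever : {v | ∃ t, A t v = 1}.Finite := by
    refine ((Set.finite_Iio (T + 2)).biUnion fun s _ ↦ hfin s).subset ?_
    rintro v ⟨t, hv⟩
    obtain ⟨s, hs, hst⟩ := exists_lt_add_two_eq_of_forall_ge hT t
    exact Set.mem_biUnion hs (by rw [Set.mem_ofPred_eq, hst]; exact hv)
  refine ⟨hever, fun hall ↦ ?_⟩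
  obtain ⟨v, hv⟩ := hever.infinite_compl.nonempty
  obtain ⟨T', hT'⟩ := hall v
  exact hv ⟨T', hT' T' le_rfl⟩
end

section
/- In synchronous majority dynamics with the constant edge weighting z ≡ 1 on an infinite locally finite graph with odd degrees, starting from a configuration where only finitely many vertices have opinion +1, the functional L_t = (1/4) ∑_{(i,j)∈E} (A^i_{t+1} − A^j_t)^2 is finite for all t, integer-valued, non-increasing, and decreases by at least 1 whenever some vertex i has A^i_{t+1} ≠ A^i_{t−1}. -/
/-!
Outside the ball of radius `t` around `W` every opinion at time `t` is `-1`, so `L_t` is a finite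
sum, and since opinions are `±1` it counts the ordered adjacent pairs with `A^i_{t+1} ≠ A^j_t`.
Expanding the squares with `(A^i)^2 = 1`,

    4 (L_t - L_{t+1}) = 2 ∑_i (A^i_{t+2} - A^i_t) S^i_{t+1}
                        + 2 ∑_{(i,j)} (A^i_t A^j_{t+1} - A^i_{t+1} A^j_t),

where `S^i_{t+1} = ∑_{j ~ i} A^j_{t+1}`. The second sum is antisymmetric under reversing the pair,
hence zero. Since degrees are odd, `S^i_{t+1}` is odd, hence nonzero, and `A^i_{t+2}` is its sign;
so every vertex term is `≥ 0`, and `≥ 2` where `A^i_{t+2} ≠ A^i_t`.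
-/

open Finset

namespace SimpleGraph

variable {V : Type*} (G : SimpleGraph V)

theorem tsum_adj_eq_zero_of_antisymm {F : V → V → ℝ} (hF : ∀ i j, F j i = -F i j) :
    ∑' p : {p : V × V // G.Adj p.1 p.2}, F p.1.1 p.1.2 = 0 := by
  let swap : {p : V × V // G.Adj p.1 p.2} ≃ {p : V × V // G.Adj p.1 p.2} :=
    ⟨fun p => ⟨p.1.swap, p.2.symm⟩, fun p => ⟨p.1.swap, p.2.symm⟩, fun _ => rfl, fun _ => rfl⟩
  have h_swap := swap.tsum_eq fun p => F p.1.1 p.1.2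
  have h_neg : ∑' p : {p : V × V // G.Adj p.1 p.2}, F p.1.2 p.1.1 =
      -∑' p : {p : V × V // G.Adj p.1 p.2}, F p.1.1 p.1.2 := by
    rw [← tsum_neg]
    exact tsum_congr fun p => hF _ _
  change ∑' p : {p : V × V // G.Adj p.1 p.2}, F p.1.2 p.1.1 = _ at h_swap
  linarith

variable [∀ v : V, Fintype (G.neighborSet v)]

def adjEquivSigmaNeighborFinset :
    {p : V × V // G.Adj p.1 p.2} ≃ Σ i, {j // j ∈ G.neighborFinset i} :=
  (Equiv.subtypeProdEquivSigmaSubtype G.Adj).trans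
    (Equiv.sigmaCongrRight fun i =>
      Equiv.subtypeEquivRight fun j => (G.mem_neighborFinset i j).symm)

theorem hasSum_adj_of_eq_zero {F : V → V → ℝ} (s : Finset V)
    (hF : ∀ i j, G.Adj i j → i ∉ s → F i j = 0) :
    HasSum (fun p : {p : V × V // G.Adj p.1 p.2} => F p.1.1 p.1.2)
      (∑ i ∈ s, ∑ j ∈ G.neighborFinset i, F i j) := by
  rw [← G.adjEquivSigmaNeighborFinset.symm.hasSum_iff]
  have h := hasSum_sum_of_ne_finset_zero (L := SummationFilter.unconditional _)
    (f := fun x : Σ i, {j // j ∈ G.neighborFinset i} => F x.1 x.2)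
    (s := s.sigma fun i => (G.neighborFinset i).attach) <| by
      rintro ⟨i, j, hj⟩ hij
      exact hF i j ((G.mem_neighborFinset i j).mp hj) (by simpa using hij)
  rw [sum_sigma] at h
  convert h using 1
  · rfl
  · exact sum_congr rfl fun i _ => (sum_attach (G.neighborFinset i) (F i)).symm

variable [DecidableEq V]

def ballFinset (W : Finset V) : ℕ → Finset V
  | 0 => W
  | n + 1 => ballFinset W n ∪ (ballFinset W n).biUnion fun v => G.neighborFinset v

theorem ballFinset_mono (W : Finset V) : Monotone (G.ballFinset W) :=
  monotone_nat_of_le_succ fun _ => subset_union_left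

theorem mem_ballFinset_succ_of_adj {W : Finset V} {n : ℕ} {i j : V} (hij : G.Adj i j)
    (hj : j ∈ G.ballFinset W n) : i ∈ G.ballFinset W (n + 1) :=
  mem_union_right _ (mem_biUnion.mpr ⟨j, hj, (G.mem_neighborFinset j i).mpr hij.symm⟩)

end SimpleGraph

theorem sub_mul_nonneg_of_majority {a S : ℤ} (ha₁ : -1 ≤ a) (ha₂ : a ≤ 1) :
    0 ≤ ((if 0 < S then 1 else -1) - a) * S := by
  split_ifs with hS
  · exact mul_nonneg (by omega) hS.le
  · exact mul_nonneg_of_nonpos_of_nonpos (by omega) (by omega)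

theorem two_le_sub_mul_of_majority {a S : ℤ} (ha : a = 1 ∨ a = -1) (hS : Odd S)
    (hne : (if 0 < S then 1 else -1) ≠ a) : 2 ≤ ((if 0 < S then 1 else -1) - a) * S := by
  obtain ⟨k, rfl⟩ := hS
  split_ifs at hne ⊢ with hpos <;> rcases ha with rfl | rfl <;> omega

theorem odd_sum_of_odd_card {ι : Type*} {s : Finset ι} {f : ι → ℤ} (hf : ∀ i ∈ s, Odd (f i))
    (hs : Odd #s) : Odd (∑ i ∈ s, f i) := by
  have h_mod : ∀ i ∈ s, f i % 2 = 1 := fun i hi => Int.odd_iff.mp (hf i hi)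
  rw [Int.odd_iff, sum_int_mod, sum_congr rfl h_mod, sum_const, nsmul_one]
  obtain ⟨k, hk⟩ := hs
  omega

open SimpleGraph

section MajorityDynamics

variable {V : Type*} [DecidableEq V] (G : SimpleGraph V) [∀ v : V, Fintype (G.neighborSet v)]

structure IsMajorityOrbit (W : Finset V) (A : ℕ → V → ℤ) : Prop where
  init : ∀ v, A 0 v = if v ∈ W then 1 else -1
  step : ∀ t v, A (t + 1) v = if 0 < ∑ j ∈ G.neighborFinset v, A t j then 1 else -1

noncomputable def energy (A : ℕ → V → ℤ) (t : ℕ) : ℝ :=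
  (1 / 4 : ℝ) * ∑' p : {p : V × V // G.Adj p.1 p.2}, ((A (t + 1) p.1.1 : ℝ) - (A t p.1.2 : ℝ)) ^ 2

namespace IsMajorityOrbit

variable {G} {W : Finset V} {A : ℕ → V → ℤ} (hA : IsMajorityOrbit G W A)
include hA

theorem eq_one_or_eq_neg_one : ∀ t v, A t v = 1 ∨ A t v = -1
  | 0, v => by rw [hA.init]; split_ifs <;> simp
  | t + 1, v => by rw [hA.step]; split_ifs <;> simp

theorem cast_sq (t : ℕ) (v : V) : (A t v : ℝ) ^ 2 = 1 := by
  rcases hA.eq_one_or_eq_neg_one t v with h | h <;> simp [h]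

theorem odd (t : ℕ) (v : V) : Odd (A t v) := by
  rcases hA.eq_one_or_eq_neg_one t v with h | h <;> simp [h]

theorem eq_neg_one_of_notMem_ballFinset : ∀ {t v}, v ∉ G.ballFinset W t → A t v = -1
  | 0, v, hv => (hA.init v).trans (if_neg hv)
  | t + 1, v, hv => by
    have h_nbrs : ∀ j ∈ G.neighborFinset v, A t j = -1 := fun j hj =>
      eq_neg_one_of_notMem_ballFinset fun hj' =>
        hv (G.mem_ballFinset_succ_of_adj ((G.mem_neighborFinset v j).mp hj) hj')
    rw [hA.step, sum_congr rfl h_nbrs, if_neg]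
    simp

theorem eq_neg_one_of_notMem_ballFinset_of_le {s t : ℕ} {v : V} (hst : s ≤ t)
    (hv : v ∉ G.ballFinset W t) : A s v = -1 :=
  hA.eq_neg_one_of_notMem_ballFinset fun h => hv (G.ballFinset_mono W hst h)

theorem odd_sum_neighbors (hodd : ∀ v, Odd (G.degree v)) (t : ℕ) (i : V) :
    Odd (∑ j ∈ G.neighborFinset i, A t j) :=
  odd_sum_of_odd_card (fun j _ => hA.odd t j) (hodd i)

theorem sub_mul_sum_neighbors_nonneg (t : ℕ) (i : V) :
    0 ≤ (A (t + 2) i - A t i) * ∑ j ∈ G.neighborFinset i, A (t + 1) j := by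
  rw [hA.step (t + 1) i]
  rcases hA.eq_one_or_eq_neg_one t i with h | h <;> rw [h] <;>
    exact sub_mul_nonneg_of_majority (by norm_num) (by norm_num)

theorem two_le_sub_mul_sum_neighbors (hodd : ∀ v, Odd (G.degree v)) {t : ℕ} {i : V}
    (hi : A (t + 2) i ≠ A t i) :
    2 ≤ (A (t + 2) i - A t i) * ∑ j ∈ G.neighborFinset i, A (t + 1) j := by
  rw [hA.step (t + 1) i] at hi ⊢
  exact two_le_sub_mul_of_majority (hA.eq_one_or_eq_neg_one t i)
    (hA.odd_sum_neighbors hodd (t + 1) i) hi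

theorem hasSum_disagreement (t : ℕ) :
    HasSum
      (fun p : {p : V × V // G.Adj p.1 p.2} => ((A (t + 1) p.1.1 : ℝ) - (A t p.1.2 : ℝ)) ^ 2)
      (∑ i ∈ G.ballFinset W (t + 1), ∑ j ∈ G.neighborFinset i,
        ((A (t + 1) i : ℝ) - (A t j : ℝ)) ^ 2) :=
  G.hasSum_adj_of_eq_zero _ fun i j hij hi => by
    rw [hA.eq_neg_one_of_notMem_ballFinset hi,
      hA.eq_neg_one_of_notMem_ballFinset fun hj => hi (G.mem_ballFinset_succ_of_adj hij hj)]
    norm_num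

theorem energy_eq_intCast (t : ℕ) :
    energy G A t = ((∑ i ∈ G.ballFinset W (t + 1), ∑ j ∈ G.neighborFinset i,
      if A (t + 1) i = A t j then 0 else 1 : ℤ) : ℝ) := by
  rw [energy, (hA.hasSum_disagreement t).tsum_eq, mul_sum]
  push_cast
  refine sum_congr rfl fun i _ => ?_
  rw [mul_sum]
  refine sum_congr rfl fun j _ => ?_
  rcases hA.eq_one_or_eq_neg_one (t + 1) i with h | h <;>
    rcases hA.eq_one_or_eq_neg_one t j with h' | h' <;> norm_num [h, h']

theorem energy_sub_energy_succ (t : ℕ) :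
    energy G A t - energy G A (t + 1) = (1 / 2 : ℝ) *
      ((∑ i ∈ G.ballFinset W (t + 2),
        (A (t + 2) i - A t i) * ∑ j ∈ G.neighborFinset i, A (t + 1) j : ℤ) : ℝ) := by
  have h_flux : HasSum
      (fun p : {p : V × V // G.Adj p.1 p.2} =>
        ((A (t + 2) p.1.1 : ℝ) - (A t p.1.1 : ℝ)) * (A (t + 1) p.1.2 : ℝ))
      (∑ i ∈ G.ballFinset W (t + 2), ∑ j ∈ G.neighborFinset i,
        ((A (t + 2) i : ℝ) - (A t i : ℝ)) * (A (t + 1) j : ℝ)) :=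
    G.hasSum_adj_of_eq_zero _ fun i j _ hi => by
      rw [hA.eq_neg_one_of_notMem_ballFinset hi,
        hA.eq_neg_one_of_notMem_ballFinset_of_le (by omega) hi]
      norm_num
  have h_next : HasSum
      (fun p : {p : V × V // G.Adj p.1 p.2} => ((A (t + 2) p.1.1 : ℝ) - (A (t + 1) p.1.2 : ℝ)) ^ 2)
      (∑ i ∈ G.ballFinset W (t + 2), ∑ j ∈ G.neighborFinset i,
        ((A (t + 2) i : ℝ) - (A (t + 1) j : ℝ)) ^ 2) :=
    hA.hasSum_disagreement (t + 1)
  have h_antisymm := G.tsum_adj_eq_zero_of_antisymm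
    (F := fun i j => 2 * ((A t i : ℝ) * A (t + 1) j - (A (t + 1) i : ℝ) * A t j))
    fun i j => by ring
  -- the antisymmetric summand is the remainder of the expansion, as opinions square to `1`
  rw [← tsum_congr fun p => ?_, (((hA.hasSum_disagreement t).sub h_next).sub
    (h_flux.mul_left 2)).tsum_eq] at h_antisymm
  · rw [energy, energy, (hA.hasSum_disagreement t).tsum_eq, h_next.tsum_eq]
    push_cast
    simp only [← mul_sum] at h_antisymm
    linarith
  · linear_combination hA.cast_sq (t + 1) p.1.1 + hA.cast_sq t p.1.2 - hA.cast_sq (t + 2) p.1.1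
      - hA.cast_sq (t + 1) p.1.2

theorem energy_succ_le (t : ℕ) : energy G A (t + 1) ≤ energy G A t := by
  have h_nonneg : 0 ≤ ∑ i ∈ G.ballFinset W (t + 2),
      (A (t + 2) i - A t i) * ∑ j ∈ G.neighborFinset i, A (t + 1) j :=
    sum_nonneg fun i _ => hA.sub_mul_sum_neighbors_nonneg t i
  have h_cast : (0 : ℝ) ≤ ((∑ i ∈ G.ballFinset W (t + 2),
      (A (t + 2) i - A t i) * ∑ j ∈ G.neighborFinset i, A (t + 1) j : ℤ) : ℝ) := by
    exact_mod_cast h_nonneg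
  linarith [hA.energy_sub_energy_succ t]

theorem energy_succ_le_sub_one (hodd : ∀ v, Odd (G.degree v)) {t : ℕ} {v : V}
    (hv : A (t + 2) v ≠ A t v) : energy G A (t + 1) ≤ energy G A t - 1 := by
  have hv_mem : v ∈ G.ballFinset W (t + 2) := by
    by_contra hv'
    exact hv ((hA.eq_neg_one_of_notMem_ballFinset hv').trans
      (hA.eq_neg_one_of_notMem_ballFinset_of_le (by omega) hv').symm)
  have h_two : 2 ≤ ∑ i ∈ G.ballFinset W (t + 2),
      (A (t + 2) i - A t i) * ∑ j ∈ G.neighborFinset i, A (t + 1) j :=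
    (hA.two_le_sub_mul_sum_neighbors hodd hv).trans
      (single_le_sum (fun i _ => hA.sub_mul_sum_neighbors_nonneg t i) hv_mem)
  have h_cast : (2 : ℝ) ≤ ((∑ i ∈ G.ballFinset W (t + 2),
      (A (t + 2) i - A t i) * ∑ j ∈ G.neighborFinset i, A (t + 1) j : ℤ) : ℝ) := by
    exact_mod_cast h_two
  linarith [hA.energy_sub_energy_succ t]

end IsMajorityOrbit

end MajorityDynamics

/-- With the constant edge weighting `z ≡ 1` on an infinite locally finite
graph with odd degrees, starting from a configuration where only the finite set `W` holds
opinion `+1`, the functional `L_t = (1/4) ∑_{(i,j)∈E} (A^i_{t+1} - A^j_t)^2` (sum over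
ordered adjacent pairs) is finite (the defining family is summable), integer-valued,
non-increasing, and decreases by at least `1` whenever some vertex `i` has
`A^i_{t+1} ≠ A^i_{t-1}`. -/
theorem stmt_11 {V : Type*} [Infinite V] [DecidableEq V] (G : SimpleGraph V)
    [∀ v : V, Fintype (G.neighborSet v)]
    (hconn : G.Connected) (hodd : ∀ v, Odd (G.degree v))
    (W : Finset V)
    (A : ℕ → V → ℤ)
    (hA0 : ∀ v, A 0 v = if v ∈ W then 1 else -1)
    (hdyn : ∀ t v, A (t + 1) v =
      if 0 < ∑ j ∈ G.neighborFinset v, A t j then 1 else -1) :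
    letI L : ℕ → ℝ := fun t => (1 / 4 : ℝ) * ∑' p : {p : V × V // G.Adj p.1 p.2},
      ((A (t + 1) p.1.1 : ℝ) - (A t p.1.2 : ℝ)) ^ 2
    (∀ t : ℕ, Summable (fun p : {p : V × V // G.Adj p.1 p.2} =>
        ((A (t + 1) p.1.1 : ℝ) - (A t p.1.2 : ℝ)) ^ 2)) ∧
    (∀ t : ℕ, ∃ n : ℤ, L t = (n : ℝ)) ∧
    Antitone L ∧
    (∀ t : ℕ, (∃ v : V, A (t + 2) v ≠ A t v) → L (t + 1) ≤ L t - 1) := by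
  have hA : IsMajorityOrbit G W A := ⟨hA0, hdyn⟩
  exact ⟨fun t => (hA.hasSum_disagreement t).summable, fun t => ⟨_, hA.energy_eq_intCast t⟩,
    antitone_nat_of_succ_le hA.energy_succ_le, fun t ⟨_, hv⟩ => hA.energy_succ_le_sub_one hodd hv⟩
end

section
/- Let f : {-1,+1}^k → {-1,+1} be monotone and odd (f(−x) = −f(x)). Let X_1,…,X_k be i.i.d. random variables with P(X_i = +1) = p > 1/2 and P(X_i = −1) = 1−p. Then P(f(X_1,…,X_k) = +1) ≥ p. -/
/-!
Encode a ±1 vector by the set `S` of its `+1` coordinates. The law of `f(X)` is then the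
`p`-biased measure `φ(p)` of the up-closed family `{S | f S = 1}`, a polynomial in `p`. For every
monotone family one has `φ(1 - φ) ≤ p(1 - p) φ'` (the Poincaré inequality combined with Russo's
formula; here proved by induction on the ground set). Oddness makes the family self-dual, so
`φ(1/2) = 1/2`, and the inequality says that the odds ratio `(φ/(1 - φ)) / (p/(1 - p))` is
nondecreasing; being `1` at `p = 1/2`, it is `≥ 1` for `p ≥ 1/2`, i.e. `φ(p) ≥ p`.
-/

open Finset Polynomial MeasureTheory ProbabilityTheory

section BiasedProb

variable {ι : Type*} [DecidableEq ι]

noncomputable def biasedWeight (E S : Finset ι) : ℝ[X] :=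
  ∏ i ∈ E, if i ∈ S then X else 1 - X

noncomputable def biasedProb (E : Finset ι) (P : Finset ι → Prop) [DecidablePred P] : ℝ[X] :=
  ∑ S ∈ E.powerset with P S, biasedWeight E S

lemma eval_biasedWeight (E S : Finset ι) (r : ℝ) :
    (biasedWeight E S).eval r = ∏ i ∈ E, if i ∈ S then r else 1 - r := by
  simp [biasedWeight, eval_prod, apply_ite]

lemma eval_biasedWeight_nonneg (E S : Finset ι) {r : ℝ} (h0 : 0 ≤ r) (h1 : r ≤ 1) :
    0 ≤ (biasedWeight E S).eval r := by
  rw [eval_biasedWeight]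
  exact prod_nonneg fun i _ => by split_ifs <;> linarith

lemma biasedWeight_insert {i : ι} {E : Finset ι} (hi : i ∉ E) (S : Finset ι) :
    biasedWeight (insert i E) S = (if i ∈ S then X else 1 - X) * biasedWeight E S :=
  prod_insert hi

lemma biasedWeight_insert_right {i : ι} {E : Finset ι} (hi : i ∉ E) (S : Finset ι) :
    biasedWeight E (insert i S) = biasedWeight E S :=
  prod_congr rfl fun j hj => by simp [ne_of_mem_of_not_mem hj hi]

variable {E : Finset ι} {P Q : Finset ι → Prop}

lemma monotone_selfDual_top_bot (hP : Monotone P) (hdual : ∀ S ⊆ E, P (E \ S) ↔ ¬P S) :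
    P E ∧ ¬P ∅ := by
  have h := hdual ∅ (empty_subset E)
  rw [sdiff_empty] at h
  have hbot : ¬P ∅ := fun hempty => h.1 (hP (empty_subset E) hempty) hempty
  exact ⟨h.2 hbot, hbot⟩

variable [DecidablePred P] [DecidablePred Q]

lemma biasedProb_empty : biasedProb ∅ P = if P ∅ then 1 else 0 := by
  split_ifs <;> simp [biasedProb, biasedWeight, filter_singleton, *]

lemma biasedProb_insert {i : ι} (hi : i ∉ E) :
    biasedProb (insert i E) P
      = X * biasedProb E (fun S => P (insert i S)) + (1 - X) * biasedProb E P := by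
  simp only [biasedProb, sum_filter, sum_powerset_insert hi, mul_sum]
  rw [add_comm]
  congr 1 <;> refine sum_congr rfl fun S hS => ?_
  · simp [biasedWeight_insert hi, biasedWeight_insert_right hi]
  · have hiS : i ∉ S := fun h => hi (mem_powerset.1 hS h)
    simp [biasedWeight_insert hi, hiS]

lemma biasedProb_add_biasedProb_not : biasedProb E P + biasedProb E (fun S => ¬P S) = 1 := by
  induction E using Finset.induction_on generalizing P with
  | empty => by_cases h : P ∅ <;> simp [biasedProb_empty, h]
  | insert i E hi ih =>
    rw [biasedProb_insert hi, biasedProb_insert hi]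
    linear_combination X * ih (P := fun S => P (insert i S)) + (1 - X) * ih (P := P)

lemma eval_biasedProb_mono (hPQ : ∀ S, P S → Q S) {r : ℝ} (h0 : 0 ≤ r) (h1 : r ≤ 1) :
    (biasedProb E P).eval r ≤ (biasedProb E Q).eval r := by
  simp only [biasedProb, eval_finsetSum]
  exact sum_le_sum_of_subset_of_nonneg (monotone_filter_right _ fun S _ => hPQ S)
    fun S _ _ => eval_biasedWeight_nonneg E S h0 h1

lemma eval_biasedProb_nonneg {r : ℝ} (h0 : 0 ≤ r) (h1 : r ≤ 1) : 0 ≤ (biasedProb E P).eval r := by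
  simp only [biasedProb, eval_finsetSum]
  exact sum_nonneg fun S _ => eval_biasedWeight_nonneg E S h0 h1

lemma one_sub_eval_biasedProb (r : ℝ) :
    1 - (biasedProb E P).eval r = (biasedProb E (fun S => ¬P S)).eval r := by
  rw [← eval_one (x := r), ← biasedProb_add_biasedProb_not (E := E) (P := P)]
  simp

lemma eval_biasedProb_le_one {r : ℝ} (h0 : 0 ≤ r) (h1 : r ≤ 1) : (biasedProb E P).eval r ≤ 1 := by
  have := eval_biasedProb_nonneg (E := E) (P := fun S => ¬P S) h0 h1
  rw [← one_sub_eval_biasedProb r] at this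
  linarith

theorem eval_biasedProb_mul_one_sub_le (hP : Monotone P) {r : ℝ} (h0 : 0 ≤ r) (h1 : r ≤ 1) :
    (biasedProb E P).eval r * (1 - (biasedProb E P).eval r)
      ≤ r * (1 - r) * (derivative (biasedProb E P)).eval r := by
  induction E using Finset.induction_on generalizing P with
  | empty => rw [biasedProb_empty]; split_ifs <;> simp
  | insert i E hi ih =>
    have hP₁ : Monotone fun S => P (insert i S) := fun S T hST => hP (insert_subset_insert i hST)
    have ih₁ := ih hP₁
    have ih₀ := ih hP
    set a := (biasedProb E fun S => P (insert i S)).eval r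
    set b := (biasedProb E P).eval r
    have hb : 0 ≤ b := eval_biasedProb_nonneg h0 h1
    have ha : a ≤ 1 := eval_biasedProb_le_one h0 h1
    have hba : b ≤ a := eval_biasedProb_mono (fun S hS => hP (subset_insert i S) hS) h0 h1
    rw [biasedProb_insert hi]
    simp only [derivative_add, derivative_mul, derivative_X, derivative_sub, derivative_one,
      eval_add, eval_mul, eval_sub, eval_X, eval_one, eval_zero]
    -- RHS - LHS = r (gap in `ih₁`) + (1 - r) (gap in `ih₀`) + r (1 - r) (a - b) (1 - (a - b)).
    linarith [mul_le_mul_of_nonneg_left ih₁ h0, mul_le_mul_of_nonneg_left ih₀ (sub_nonneg.2 h1),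
      mul_nonneg (mul_nonneg h0 (sub_nonneg.2 h1))
        (mul_nonneg (sub_nonneg.2 hba) (by linarith : 0 ≤ 1 - (a - b)))]

lemma eval_one_sub_biasedProb (hdual : ∀ S ⊆ E, P (E \ S) ↔ ¬P S) (r : ℝ) :
    (biasedProb E P).eval (1 - r) = 1 - (biasedProb E P).eval r := by
  rw [one_sub_eval_biasedProb]
  simp only [biasedProb, eval_finsetSum, eval_biasedWeight]
  refine sum_nbij' (E \ ·) (E \ ·) ?_ ?_ ?_ ?_ ?_
  · intro S hS
    simp only [mem_filter, mem_powerset] at hS ⊢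
    exact ⟨sdiff_subset, fun h => (hdual S hS.1).1 h hS.2⟩
  · intro S hS
    simp only [mem_filter, mem_powerset] at hS ⊢
    exact ⟨sdiff_subset, (hdual S hS.1).2 hS.2⟩
  · intro S hS
    exact Finset.sdiff_sdiff_eq_self (mem_powerset.1 (mem_filter.1 hS).1)
  · intro S hS
    exact Finset.sdiff_sdiff_eq_self (mem_powerset.1 (mem_filter.1 hS).1)
  · intro S _
    refine prod_congr rfl fun i hi => ?_
    by_cases h : i ∈ S <;> simp [h, hi]

lemma eval_biasedProb_one (hE : P E) : (biasedProb E P).eval 1 = 1 := by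
  refine le_antisymm (eval_biasedProb_le_one zero_le_one le_rfl) ?_
  calc (1 : ℝ) = (biasedWeight E E).eval 1 := by
        rw [eval_biasedWeight, prod_congr rfl fun i hi => if_pos hi, prod_const_one]
    _ ≤ (biasedProb E P).eval 1 := by
      simp only [biasedProb, eval_finsetSum]
      exact single_le_sum (fun S _ => eval_biasedWeight_nonneg E S zero_le_one le_rfl)
        (mem_filter.2 ⟨mem_powerset_self E, hE⟩)

lemma eval_biasedProb_lt_one (hempty : ¬P ∅) {r : ℝ} (h0 : 0 ≤ r) (h1 : r < 1) :
    (biasedProb E P).eval r < 1 := by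
  suffices 0 < (biasedProb E fun S => ¬P S).eval r by
    rw [← one_sub_eval_biasedProb] at this
    linarith
  calc (0 : ℝ) < (biasedWeight E ∅).eval r := by simp [eval_biasedWeight, sub_pos.2 h1]
    _ ≤ (biasedProb E fun S => ¬P S).eval r := by
      simp only [biasedProb, eval_finsetSum]
      exact single_le_sum (fun S _ => eval_biasedWeight_nonneg E S h0 h1.le)
        (mem_filter.2 ⟨empty_mem_powerset E, hempty⟩)

theorem le_eval_biasedProb (hP : Monotone P) (hdual : ∀ S ⊆ E, P (E \ S) ↔ ¬P S) {p : ℝ}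
    (hp : 1 / 2 ≤ p) (hp1 : p ≤ 1) : p ≤ (biasedProb E P).eval p := by
  obtain ⟨htop, hbot⟩ := monotone_selfDual_top_bot hP hdual
  rcases hp1.eq_or_lt with rfl | hp1
  · exact (eval_biasedProb_one htop).ge
  set φ := fun r => (biasedProb E P).eval r
  set φ' := fun r => (derivative (biasedProb E P)).eval r
  have hden : ∀ r ∈ Set.Ico (1 / 2 : ℝ) 1, 0 < r * (1 - φ r) := fun r ⟨hr, hr1⟩ =>
    mul_pos (by linarith) (sub_pos.2 (eval_biasedProb_lt_one hbot (by linarith) hr1))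
  -- The odds ratio `(φ / (1 - φ)) / (r / (1 - r))`; the differential inequality says `Ψ' ≥ 0`.
  set Ψ := fun r => φ r * (1 - r) / (r * (1 - φ r))
  have hΨ : ∀ r ∈ Set.Ico (1 / 2 : ℝ) 1,
      HasDerivAt Ψ ((r * (1 - r) * φ' r - φ r * (1 - φ r)) / (r * (1 - φ r)) ^ 2) r := by
    intro r hr
    have hφ := Polynomial.hasDerivAt (biasedProb E P) r
    refine ((hφ.mul ((hasDerivAt_id r).const_sub 1)).div
      ((hasDerivAt_id r).mul (hφ.const_sub 1)) (hden r hr).ne').congr_deriv ?_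
    simp only [φ, φ', Pi.mul_apply, id]
    ring
  have hmono : MonotoneOn Ψ (Set.Ico (1 / 2) 1) := by
    refine monotoneOn_of_hasDerivWithinAt_nonneg (convex_Ico _ _)
      (fun r hr => (hΨ r hr).continuousAt.continuousWithinAt)
      (fun r hr => (hΨ r (interior_subset hr)).hasDerivWithinAt) fun r hr => ?_
    rw [interior_Ico] at hr
    exact div_nonneg (sub_nonneg.2 (eval_biasedProb_mul_one_sub_le hP (by linarith [hr.1]) hr.2.le))
      (sq_nonneg _)
  have hhalf : φ (1 / 2) = 1 / 2 := by
    have := eval_one_sub_biasedProb hdual (1 / 2)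
    norm_num at this
    linarith
  have hΨp : Ψ (1 / 2) ≤ Ψ p := hmono ⟨le_rfl, by norm_num⟩ ⟨hp, hp1⟩ hp
  have hΨhalf : Ψ (1 / 2) = 1 := by simp only [Ψ, hhalf]; norm_num
  rw [hΨhalf, one_le_div (hden p ⟨hp, hp1⟩)] at hΨp
  linarith

end BiasedProb

section Probability

variable {Ω β ι : Type*} [DecidableEq β] [Fintype ι] [DecidableEq ι] {X : ι → Ω → β} {b : β}

lemma setOf_filter_eq_eq_iInter (S : Finset ι) :
    {ω | ({i | X i ω = b} : Finset ι) = S}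
      = ⋂ i ∈ univ, X i ⁻¹' (if i ∈ S then {b} else {b}ᶜ) := by
  ext ω
  simp only [Set.mem_ofPred_eq, Set.mem_iInter, Set.mem_preimage, mem_univ, true_implies,
    Finset.ext_iff, mem_filter, true_and]
  refine forall_congr' fun i => ?_
  split_ifs with h <;> simp [h]

variable [MeasurableSpace Ω] [MeasurableSpace β] [MeasurableSingletonClass β] {μ : Measure Ω}
  [IsProbabilityMeasure μ] {p : ℝ}

lemma measure_filter_eq_eq_eval_biasedWeight (hX : ∀ i, Measurable (X i)) (hindep : iIndepFun X μ)
    (hpX : ∀ i, μ {ω | X i ω = b} = ENNReal.ofReal p) (hp0 : 0 ≤ p) (hp1 : p ≤ 1) (S : Finset ι) :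
    μ {ω | ({i | X i ω = b} : Finset ι) = S} = ENNReal.ofReal ((biasedWeight univ S).eval p) := by
  have hfactor : ∀ i, μ (X i ⁻¹' (if i ∈ S then {b} else {b}ᶜ))
      = ENNReal.ofReal (if i ∈ S then p else 1 - p) := by
    intro i
    split_ifs
    · exact hpX i
    · rw [Set.preimage_compl, measure_compl (hX i (measurableSet_singleton b)) (measure_ne_top μ _),
        measure_univ, ENNReal.ofReal_sub 1 hp0, ENNReal.ofReal_one]
      exact congrArg (1 - ·) (hpX i)
  rw [setOf_filter_eq_eq_iInter,
    hindep.measure_inter_preimage_eq_mul univ fun i _ => by split_ifs <;> measurability,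
    prod_congr rfl fun i _ => hfactor i, eval_biasedWeight,
    ENNReal.ofReal_prod_of_nonneg fun i _ => by split_ifs <;> linarith]

theorem measure_filter_eq_eq_eval_biasedProb (hX : ∀ i, Measurable (X i)) (hindep : iIndepFun X μ)
    (hpX : ∀ i, μ {ω | X i ω = b} = ENNReal.ofReal p) (hp0 : 0 ≤ p) (hp1 : p ≤ 1)
    (P : Finset ι → Prop) [DecidablePred P] :
    μ {ω | P ({i | X i ω = b} : Finset ι)} = ENNReal.ofReal ((biasedProb univ P).eval p) := by
  set Y : Ω → Finset ι := fun ω => {i | X i ω = b}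
  have hY : ∀ S ∈ univ.filter P, MeasurableSet (Y ⁻¹' {S}) := fun S _ => by
    change MeasurableSet {ω | ({i | X i ω = b} : Finset ι) = S}
    rw [setOf_filter_eq_eq_iInter]
    exact .biInter (Finset.countable_toSet _) fun i _ => hX i (by split_ifs <;> measurability)
  have hPY : {ω | P (Y ω)} = Y ⁻¹' ↑(univ.filter P) := by ext; simp
  rw [hPY, ← sum_measure_preimage_singleton _ hY, biasedProb, powerset_univ, eval_finsetSum,
    ENNReal.ofReal_sum_of_nonneg fun S _ => eval_biasedWeight_nonneg _ S hp0 hp1]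
  exact sum_congr rfl fun S _ => measure_filter_eq_eq_eval_biasedWeight hX hindep hpX hp0 hp1 S

end Probability

section SignVector

variable {ι : Type*} [DecidableEq ι]

def signVector (S : Finset ι) : ι → ℤ := fun i => if i ∈ S then 1 else -1

lemma signVector_mono : Monotone (signVector : Finset ι → ι → ℤ) := fun S T hST i => by
  unfold signVector
  by_cases hS : i ∈ S
  · simp [hS, hST hS]
  · split_ifs <;> simp

lemma signVector_eq_one_or (S : Finset ι) (i : ι) : signVector S i = 1 ∨ signVector S i = -1 := by
  unfold signVector
  split_ifs <;> simp

lemma signVector_compl [Fintype ι] (S : Finset ι) : signVector Sᶜ = fun i => -signVector S i := by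
  funext i
  by_cases h : i ∈ S <;> simp [signVector, h]

lemma eq_signVector [Fintype ι] {x : ι → ℤ} (hx : ∀ i, x i = 1 ∨ x i = -1) :
    x = signVector {i | x i = 1} := by
  funext i
  rcases hx i with h | h <;> simp [signVector, h]

end SignVector

/-- If `f : {-1,+1}^k → {-1,+1}` is monotone and odd, and `X_1,…,X_k` are
i.i.d. with `P(X_i = +1) = p > 1/2` (and `X_i ∈ {-1,+1}`), then
`P(f(X_1,…,X_k) = +1) ≥ p`. -/
theorem stmt_12 {Ω : Type*} [MeasurableSpace Ω] (μ : Measure Ω) [IsProbabilityMeasure μ]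
    (k : ℕ) (f : (Fin k → ℤ) → ℤ)
    (hfval : ∀ x, (∀ i, x i = 1 ∨ x i = -1) → f x = 1 ∨ f x = -1)
    (hmono : Monotone f)
    (hodd : ∀ x, f (fun i => -(x i)) = -f x)
    (X : Fin k → Ω → ℤ) (hXmeas : ∀ i, Measurable (X i))
    (hXval : ∀ i ω, X i ω = 1 ∨ X i ω = -1)
    (hindep : iIndepFun X μ)
    (p : ℝ) (hp : 1 / 2 < p)
    (hpX : ∀ i, μ {ω | X i ω = 1} = ENNReal.ofReal p) :
    ENNReal.ofReal p ≤ μ {ω | f (fun i => X i ω) = 1} := by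
  classical
  set P : Finset (Fin k) → Prop := fun S => f (signVector S) = 1
  have hfS : ∀ S, f (signVector S) = 1 ∨ f (signVector S) = -1 :=
    fun S => hfval _ (signVector_eq_one_or S)
  have hP : Monotone P := fun S T hST (hS : f _ = 1) => by
    have := hmono (signVector_mono hST)
    rcases hfS T with h | h <;> simp only [P] <;> omega
  have hdual : ∀ S ⊆ univ, P (univ \ S) ↔ ¬P S := fun S _ => by
    simp only [P, ← compl_eq_univ_sdiff, signVector_compl, hodd]
    rcases hfS S with h | h <;> omega
  obtain ⟨i, -⟩ : (univ : Finset (Fin k)).Nonempty := by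
    obtain ⟨htop, hbot⟩ := monotone_selfDual_top_bot hP hdual
    exact nonempty_iff_ne_empty.2 fun h => hbot (h ▸ htop)
  have hp1 : p ≤ 1 := ENNReal.ofReal_le_one.1 (hpX i ▸ prob_le_one)
  calc ENNReal.ofReal p ≤ ENNReal.ofReal ((biasedProb univ P).eval p) :=
        ENNReal.ofReal_le_ofReal (le_eval_biasedProb hP hdual hp.le hp1)
    _ = μ {ω | P {i | X i ω = 1}} :=
        (measure_filter_eq_eq_eval_biasedProb hXmeas hindep hpX (by linarith) hp1 P).symm
    _ = μ {ω | f (fun i => X i ω) = 1} := by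
        simp only [P, ← eq_signVector (hXval · _)]
end
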